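/- arXiv:1612.03156 — 11 statements merged into one kernel-verified Lean document; each statement's English description precedes it below -/
import Mathlib

section
/- Let n ≥ 1 and let p, q ∈ (0,1)^n. Let P and Q be the product distributions over {0,1}^n with mean vectors p and q respectively. Then ‖P − Q‖₁² ≤ 2·∑_{i=1}^n (p_i − q_i)²/(q_i(1 − q_i)). -/
/-- The product distribution over `{0,1}^n` with mean vector `p`. -/
noncomputable def prodDist {n : ℕ} (p : Fin n → ℝ) : (Fin n → Bool) → ℝ :=
  fun x => ∏ i, if x i then p i else 1 - p i

/-- The L1 distance between two distributions on a finite set. -/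
noncomputable def l1Dist {α : Type*} [Fintype α] (P Q : α → ℝ) : ℝ :=
  ∑ x, |P x - Q x|

/-!
Pinsker's inequality bounds the squared `L¹` distance by twice the Kullback–Leibler divergence;
the divergence of two product distributions is the sum of the divergences of their coordinates;
and the divergence of two Bernoulli distributions is at most their `χ²` divergence
`(p - q)² / (q (1 - q))`, by `log t ≤ t - 1`.
-/

open Finset Real

noncomputable def finKL {α : Type*} [Fintype α] (P Q : α → ℝ) : ℝ :=
  ∑ x, P x * (log (P x) - log (Q x))

def bernDist (a : ℝ) : Bool → ℝ := fun b => if b then a else 1 - a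

lemma bernDist_pos {a : ℝ} (ha : a ∈ Set.Ioo 0 1) (b : Bool) : 0 < bernDist a b := by
  cases b
  · exact sub_pos.2 ha.2
  · exact ha.1

lemma sum_bernDist (a : ℝ) : ∑ b, bernDist a b = 1 := by
  simp [bernDist]

lemma finKL_bernDist (a b : ℝ) :
    finKL (bernDist a) (bernDist b)
      = a * (log a - log b) + (1 - a) * (log (1 - a) - log (1 - b)) := by
  simp [finKL, bernDist]

lemma log_sum_inequality {α : Type*} (s : Finset α) {P Q : α → ℝ}
    (hP : ∀ x ∈ s, 0 < P x) (hQ : ∀ x ∈ s, 0 < Q x) :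
    (∑ x ∈ s, P x) * (log (∑ x ∈ s, P x) - log (∑ x ∈ s, Q x))
      ≤ ∑ x ∈ s, P x * (log (P x) - log (Q x)) := by
  rcases s.eq_empty_or_nonempty with rfl | hs
  · simp
  set a := ∑ x ∈ s, P x
  set b := ∑ x ∈ s, Q x
  have ha : 0 < a := sum_pos hP hs
  have hb : 0 < b := sum_pos hQ hs
  -- `log t ≤ t - 1` at `t = (a / b) * Q x / P x`, then summed over `s`
  have hpoint : ∀ x ∈ s, P x * log (a / b) + P x - a / b * Q x
      ≤ P x * (log (P x) - log (Q x)) := by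
    intro x hx
    have hPx := hP x hx
    have hQx := hQ x hx
    have h := log_le_sub_one_of_pos (show 0 < a / b * Q x / P x by positivity)
    rw [log_div (by positivity) hPx.ne', log_mul (by positivity) hQx.ne'] at h
    have h' := mul_le_mul_of_nonneg_left h hPx.le
    have e : P x * (a / b * Q x / P x - 1) = a / b * Q x - P x := by field_simp
    linarith
  calc a * (log a - log b)
      = ∑ x ∈ s, (P x * log (a / b) + P x - a / b * Q x) := by
        rw [sum_sub_distrib, sum_add_distrib, ← sum_mul, ← mul_sum, log_div ha.ne' hb.ne']
        field_simp
        ring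
    _ ≤ _ := sum_le_sum hpoint

lemma l1Dist_eq_two_mul {α : Type*} [Fintype α] [DecidableEq α] {P Q : α → ℝ}
    (h : ∑ x, P x = ∑ x, Q x) :
    l1Dist P Q = 2 * ∑ x ∈ univ.filter (fun x => Q x ≤ P x), (P x - Q x) := by
  set A := univ.filter (fun x => Q x ≤ P x)
  have hcompl : ∑ x ∈ Aᶜ, (P x - Q x) = -∑ x ∈ A, (P x - Q x) := by
    have hsplit := sum_add_sum_compl A (fun x => P x - Q x)
    have hzero : ∑ x, (P x - Q x) = 0 := by rw [sum_sub_distrib, h, sub_self]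
    linarith
  rw [l1Dist, ← sum_add_sum_compl A]
  have hA : ∑ x ∈ A, |P x - Q x| = ∑ x ∈ A, (P x - Q x) :=
    sum_congr rfl fun x hx => abs_of_nonneg (sub_nonneg.2 (mem_filter.1 hx).2)
  have hAc : ∑ x ∈ Aᶜ, |P x - Q x| = -∑ x ∈ Aᶜ, (P x - Q x) := by
    rw [← sum_neg_distrib]
    refine sum_congr rfl fun x hx => abs_of_neg (sub_neg.2 ?_)
    simpa [A] using hx
  rw [hA, hAc, hcompl]
  ring

lemma two_mul_sq_le_finKL_bernDist {a b : ℝ} (hb : 0 < b) (hba : b ≤ a) (ha : a < 1) :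
    2 * (a - b) ^ 2 ≤ finKL (bernDist a) (bernDist b) := by
  rw [finKL_bernDist]
  set f : ℝ → ℝ := fun t =>
    a * (log a - log t) + (1 - a) * (log (1 - a) - log (1 - t)) - 2 * (a - t) ^ 2
  set f' : ℝ → ℝ := fun t => -(a / t) + (1 - a) / (1 - t) + 4 * (a - t)
  have hderiv : ∀ t ∈ Set.Icc b a, HasDerivAt f (f' t) t := by
    intro t ht
    have ht0 : t ≠ 0 := (hb.trans_le ht.1).ne'
    have ht1 : 1 - t ≠ 0 := (sub_pos.2 (ht.2.trans_lt ha)).ne'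
    have hlog1 := ((hasDerivAt_id t).const_sub 1).log ht1
    refine (((((hasDerivAt_log ht0).const_sub (log a)).const_mul a).add
      ((hlog1.const_sub (log (1 - a))).const_mul (1 - a))).sub
      ((((hasDerivAt_id t).const_sub a).pow 2).const_mul 2)).congr_deriv ?_
    simp only [f', id]
    field_simp
    ring
  -- `f' t = (a - t) * (4 - 1 / (t * (1 - t)))` and `t * (1 - t) ≤ 1 / 4`
  have hf'_nonpos : ∀ t ∈ Set.Icc b a, f' t ≤ 0 := by
    intro t ht
    have ht0 : 0 < t := hb.trans_le ht.1
    have ht1 : 0 < 1 - t := sub_pos.2 (ht.2.trans_lt ha)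
    have hquarter : 4 * (t * (1 - t)) ≤ 1 := by nlinarith [sq_nonneg (2 * t - 1)]
    have hmul : f' t * (t * (1 - t)) = (a - t) * (4 * (t * (1 - t)) - 1) := by
      simp only [f']
      field_simp
      ring
    have : f' t * (t * (1 - t)) ≤ 0 :=
      hmul ▸ mul_nonpos_of_nonneg_of_nonpos (sub_nonneg.2 ht.2) (by linarith)
    exact nonpos_of_mul_nonpos_left this (by positivity)
  have hanti : AntitoneOn f (Set.Icc b a) :=
    antitoneOn_of_hasDerivWithinAt_nonpos (convex_Icc b a)
      (fun t ht => (hderiv t ht).continuousAt.continuousWithinAt)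
      (fun t ht => (hderiv t (interior_subset ht)).hasDerivWithinAt)
      (fun t ht => hf'_nonpos t (interior_subset ht))
  have hfa : f a = 0 := by simp [f]
  have := hanti (Set.left_mem_Icc.2 hba) (Set.right_mem_Icc.2 hba) hba
  simp only [hfa, f] at this
  linarith

-- With `a`, `b` the masses of `{Q ≤ P}` under `P`, `Q`, the `L¹` distance is exactly `2 (a - b)`,
-- while by the log-sum inequality the divergence dominates that of the Bernoulli pair `(a, b)`.
theorem sq_l1Dist_le_two_mul_finKL {α : Type*} [Fintype α] {P Q : α → ℝ}
    (hP : ∀ x, 0 < P x) (hQ : ∀ x, 0 < Q x) (hP1 : ∑ x, P x = 1) (hQ1 : ∑ x, Q x = 1) :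
    l1Dist P Q ^ 2 ≤ 2 * finKL P Q := by
  classical
  set A := univ.filter (fun x => Q x ≤ P x)
  set a := ∑ x ∈ A, P x
  set b := ∑ x ∈ A, Q x
  have hPc : ∑ x ∈ Aᶜ, P x = 1 - a := by rw [← hP1, ← sum_add_sum_compl A, add_sub_cancel_left]
  have hQc : ∑ x ∈ Aᶜ, Q x = 1 - b := by rw [← hQ1, ← sum_add_sum_compl A, add_sub_cancel_left]
  have hl1 : l1Dist P Q = 2 * (a - b) := by
    rw [l1Dist_eq_two_mul (hP1.trans hQ1.symm), sum_sub_distrib]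
  have hKL : finKL (bernDist a) (bernDist b) ≤ finKL P Q := by
    have hA := log_sum_inequality A (fun x _ => hP x) (fun x _ => hQ x)
    have hAc := log_sum_inequality Aᶜ (fun x _ => hP x) (fun x _ => hQ x)
    rw [hPc, hQc] at hAc
    rw [finKL_bernDist, finKL, ← sum_add_sum_compl A]
    exact add_le_add hA hAc
  have hba : b ≤ a := sum_le_sum fun x hx => (mem_filter.1 hx).2
  rcases hba.eq_or_lt with hab | hlt
  · simp only [← hab, finKL_bernDist, sub_self, mul_zero, add_zero] at hKL
    rw [hl1, ← hab, sub_self]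
    linarith
  have hAne : A.Nonempty := by
    refine nonempty_of_sum_ne_zero (f := fun x => P x - Q x) ?_
    rw [sum_sub_distrib]
    exact sub_ne_zero.2 hlt.ne'
  have hAcne : Aᶜ.Nonempty := by
    refine nonempty_of_sum_ne_zero (f := fun x => P x - Q x) ?_
    rw [sum_sub_distrib, hPc, hQc]
    linarith
  have hb : 0 < b := sum_pos (fun x _ => hQ x) hAne
  have ha : a < 1 := sub_pos.1 (hPc ▸ sum_pos (fun x _ => hP x) hAcne)
  rw [hl1]
  linarith [two_mul_sq_le_finKL_bernDist hb hba ha]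

lemma sum_prod_mul_apply {ι β : Type*} [Fintype ι] [DecidableEq ι] [Fintype β]
    {f : ι → β → ℝ} (hf : ∀ j, ∑ b, f j b = 1) (h : β → ℝ) (i : ι) :
    ∑ x : ι → β, (∏ j, f j (x j)) * h (x i) = ∑ b, f i b * h b := by
  set F : ι → β → ℝ := fun j b => f j b * if j = i then h b else 1
  have hfactor : ∀ x : ι → β, (∏ j, f j (x j)) * h (x i) = ∏ j, F j (x j) := by
    intro x
    rw [prod_mul_distrib, prod_ite_eq' univ i, if_pos (mem_univ i)]
  calc ∑ x : ι → β, (∏ j, f j (x j)) * h (x i)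
      = ∏ j, ∑ b, F j b := by simp only [hfactor, Fintype.prod_sum]
    _ = ∑ b, F i b := prod_eq_single i (fun j _ hji => by simp [F, hji, hf j]) (by simp)
    _ = ∑ b, f i b * h b := by simp [F]

lemma finKL_pi {ι β : Type*} [Fintype ι] [DecidableEq ι] [Fintype β] {f g : ι → β → ℝ}
    (hf : ∀ j b, 0 < f j b) (hg : ∀ j b, 0 < g j b) (hf1 : ∀ j, ∑ b, f j b = 1) :
    finKL (fun x : ι → β => ∏ j, f j (x j)) (fun x => ∏ j, g j (x j))
      = ∑ j, finKL (f j) (g j) := by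
  have hlog : ∀ x : ι → β, log (∏ j, f j (x j)) - log (∏ j, g j (x j))
      = ∑ j, (log (f j (x j)) - log (g j (x j))) := fun x => by
    rw [log_prod fun j _ => (hf j (x j)).ne', log_prod fun j _ => (hg j (x j)).ne',
      sum_sub_distrib]
  simp only [finKL, hlog, mul_sum]
  rw [sum_comm]
  exact sum_congr rfl fun j _ =>
    sum_prod_mul_apply hf1 (fun b => log (f j b) - log (g j b)) j

lemma finKL_bernDist_le {p q : ℝ} (hp : p ∈ Set.Ioo 0 1) (hq : q ∈ Set.Ioo 0 1) :
    finKL (bernDist p) (bernDist q) ≤ (p - q) ^ 2 / (q * (1 - q)) := by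
  obtain ⟨hp0, hp1⟩ := hp
  obtain ⟨hq0, hq1⟩ := hq
  have hp1' : 0 < 1 - p := sub_pos.2 hp1
  have hq1' : 0 < 1 - q := sub_pos.2 hq1
  -- `log (u / v) ≤ u / v - 1` on both atoms turns the divergence into the `χ²` divergence
  have h1 := log_le_sub_one_of_pos (div_pos hp0 hq0)
  have h2 := log_le_sub_one_of_pos (div_pos hp1' hq1')
  rw [log_div hp0.ne' hq0.ne'] at h1
  rw [log_div hp1'.ne' hq1'.ne'] at h2
  have hchi : p * (p / q - 1) + (1 - p) * ((1 - p) / (1 - q) - 1)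
      = (p - q) ^ 2 / (q * (1 - q)) := by
    field_simp
    ring
  rw [finKL_bernDist, ← hchi]
  exact add_le_add (mul_le_mul_of_nonneg_left h1 hp0.le) (mul_le_mul_of_nonneg_left h2 hp1'.le)

lemma prodDist_eq_prod_bernDist {n : ℕ} (p : Fin n → ℝ) :
    prodDist p = fun x => ∏ i, bernDist (p i) (x i) := rfl

lemma prodDist_pos {n : ℕ} {p : Fin n → ℝ} (hp : ∀ i, p i ∈ Set.Ioo 0 1) (x : Fin n → Bool) :
    0 < prodDist p x :=
  prod_pos fun i _ => bernDist_pos (hp i) (x i)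

lemma sum_prodDist {n : ℕ} (p : Fin n → ℝ) : ∑ x, prodDist p x = 1 := by
  rw [prodDist_eq_prod_bernDist, ← Fintype.prod_sum]
  simp only [sum_bernDist, prod_const_one]

theorem stmt1_general (n : ℕ) (p q : Fin n → ℝ)
    (hp : ∀ i, p i ∈ Set.Ioo (0:ℝ) 1) (hq : ∀ i, q i ∈ Set.Ioo (0:ℝ) 1) :
    (l1Dist (prodDist p) (prodDist q)) ^ 2
      ≤ 2 * ∑ i, (p i - q i) ^ 2 / (q i * (1 - q i)) := by
  calc l1Dist (prodDist p) (prodDist q) ^ 2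
      ≤ 2 * finKL (prodDist p) (prodDist q) :=
        sq_l1Dist_le_two_mul_finKL (prodDist_pos hp) (prodDist_pos hq) (sum_prodDist p)
          (sum_prodDist q)
    _ = 2 * ∑ i, finKL (bernDist (p i)) (bernDist (q i)) := by
        rw [prodDist_eq_prod_bernDist, prodDist_eq_prod_bernDist,
          finKL_pi (fun i => bernDist_pos (hp i)) (fun i => bernDist_pos (hq i))
            fun i => sum_bernDist (p i)]
    _ ≤ 2 * ∑ i, (p i - q i) ^ 2 / (q i * (1 - q i)) := by
        gcongr with i
        exact finKL_bernDist_le (hp i) (hq i)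

theorem stmt1 (n : ℕ) (hn : 1 ≤ n) (p q : Fin n → ℝ)
    (hp : ∀ i, p i ∈ Set.Ioo (0:ℝ) 1) (hq : ∀ i, q i ∈ Set.Ioo (0:ℝ) 1) :
    (l1Dist (prodDist p) (prodDist q)) ^ 2
      ≤ 2 * ∑ i, (p i - q i) ^ 2 / (q i * (1 - q i)) :=
  stmt1_general n p q hp hq
end

section
/- There exists an absolute constant c ∈ (0,1) such that the following holds for all n ≥ 1 and all p, q ∈ (0,1)^n: letting P and Q be the product distributions over {0,1}^n with mean vectors p and q, one has c·min(1, (∑_{i=1}^n (p_i − q_i)²)²) ≤ ‖P − Q‖₁² ≤ 8·∑_{i=1}^n (p_i − q_i)²/((p_i + q_i)(2 − p_i − q_i)). (The lower bound says ‖P−Q‖₁² is at least a constant times min(1, ‖p−q‖₂⁴).) -/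
open Finset Real

private lemma sqrt_prod'' {ι : Type*} (s : Finset ι) (f : ι → ℝ) (hf : ∀ i ∈ s, 0 ≤ f i) :
    Real.sqrt (∏ i ∈ s, f i) = ∏ i ∈ s, Real.sqrt (f i) := by
  induction s using Finset.cons_induction with
  | empty => simp
  | cons a s ha ih =>
    rw [Finset.prod_cons, Finset.prod_cons, Real.sqrt_mul (hf a (Finset.mem_cons_self a s)),
      ih (fun i hi => hf i (Finset.mem_cons_of_mem hi))]

private lemma one_add_sum_le_prod' {ι : Type*} (s : Finset ι) (h : ι → ℝ)
    (hh : ∀ i ∈ s, 0 ≤ h i) : 1 + ∑ i ∈ s, h i ≤ ∏ i ∈ s, (1 + h i) := by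
  induction s using Finset.cons_induction with
  | empty => simp
  | cons a s ha ih =>
    rw [Finset.prod_cons, Finset.sum_cons]
    have ih' := ih (fun i hi => hh i (Finset.mem_cons_of_mem hi))
    have ha' : 0 ≤ h a := hh a (Finset.mem_cons_self a s)
    have hs : 0 ≤ ∑ i ∈ s, h i := Finset.sum_nonneg fun i hi => hh i (Finset.mem_cons_of_mem hi)
    nlinarith

private lemma one_sub_sum_le_prod' {ι : Type*} (s : Finset ι) (h : ι → ℝ)
    (hh : ∀ i ∈ s, 0 ≤ h i) (hh1 : ∀ i ∈ s, h i ≤ 1) :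
    1 - ∑ i ∈ s, h i ≤ ∏ i ∈ s, (1 - h i) := by
  induction s using Finset.cons_induction with
  | empty => simp
  | cons a s ha ih =>
    rw [Finset.prod_cons, Finset.sum_cons]
    have ih' := ih (fun i hi => hh i (Finset.mem_cons_of_mem hi))
      (fun i hi => hh1 i (Finset.mem_cons_of_mem hi))
    have ha' : 0 ≤ h a := hh a (Finset.mem_cons_self a s)
    have ha1 : h a ≤ 1 := hh1 a (Finset.mem_cons_self a s)
    have hs : 0 ≤ ∑ i ∈ s, h i := Finset.sum_nonneg fun i hi => hh i (Finset.mem_cons_of_mem hi)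
    nlinarith

-- basic facts about the per-coordinate Hellinger quantity
private lemma sq_sqrt_sub {p q : ℝ} (hp : 0 ≤ p) (hq : 0 ≤ q) :
    (Real.sqrt p - Real.sqrt q) ^ 2 = p + q - 2 * Real.sqrt (p * q) := by
  have sp := Real.sq_sqrt hp
  have sq := Real.sq_sqrt hq
  have hm : Real.sqrt p * Real.sqrt q = Real.sqrt (p * q) := (Real.sqrt_mul hp q).symm
  linear_combination sp + sq - 2 * hm

private lemma sq_key {p q : ℝ} (hp : 0 ≤ p) (hq : 0 ≤ q) :
    (p - q) ^ 2 = (Real.sqrt p - Real.sqrt q) ^ 2 * (Real.sqrt p + Real.sqrt q) ^ 2 := by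
  have sp := Real.sq_sqrt hp
  have sq := Real.sq_sqrt hq
  nlinarith [sp, sq]

private lemma sqrt_term_ge {p q : ℝ} (hp : p ∈ Set.Ioo (0:ℝ) 1) (hq : q ∈ Set.Ioo (0:ℝ) 1) :
    (p - q) ^ 2 / 4 ≤ (Real.sqrt p - Real.sqrt q) ^ 2 := by
  have hsp : Real.sqrt p ≤ 1 := by
    have := Real.sqrt_le_sqrt hp.2.le
    simpa using this
  have hsq : Real.sqrt q ≤ 1 := by
    have := Real.sqrt_le_sqrt hq.2.le
    simpa using this
  have hsp0 : 0 ≤ Real.sqrt p := Real.sqrt_nonneg p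
  have hsq0 : 0 ≤ Real.sqrt q := Real.sqrt_nonneg q
  have key := sq_key hp.1.le hq.1.le
  have hT : (Real.sqrt p + Real.sqrt q) ^ 2 ≤ 4 := by nlinarith
  have hA : (0:ℝ) ≤ (Real.sqrt p - Real.sqrt q) ^ 2 := sq_nonneg _
  nlinarith [mul_le_mul_of_nonneg_left hT hA]

private lemma sqrt_term_le {p q : ℝ} (hp : p ∈ Set.Ioo (0:ℝ) 1) (hq : q ∈ Set.Ioo (0:ℝ) 1) :
    (Real.sqrt p - Real.sqrt q) ^ 2 ≤ (p - q) ^ 2 / (p + q) := by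
  have hsp0 : 0 ≤ Real.sqrt p := Real.sqrt_nonneg p
  have hsq0 : 0 ≤ Real.sqrt q := Real.sqrt_nonneg q
  have sp := Real.sq_sqrt hp.1.le
  have sq := Real.sq_sqrt hq.1.le
  have hpq : 0 < p + q := by linarith [hp.1, hq.1]
  rw [le_div_iff₀ hpq]
  have key := sq_key hp.1.le hq.1.le
  nlinarith [sq_nonneg (Real.sqrt p - Real.sqrt q), mul_nonneg hsp0 hsq0]

private lemma hell_eq {p q : ℝ} (hp : p ∈ Set.Ioo (0:ℝ) 1) (hq : q ∈ Set.Ioo (0:ℝ) 1) :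
    1 - (Real.sqrt (p * q) + Real.sqrt ((1 - p) * (1 - q)))
      = ((Real.sqrt p - Real.sqrt q) ^ 2 + (Real.sqrt (1-p) - Real.sqrt (1-q)) ^ 2) / 2 := by
  have e1 := sq_sqrt_sub hp.1.le hq.1.le
  have e2 := sq_sqrt_sub (by linarith [hp.2] : (0:ℝ) ≤ 1 - p) (by linarith [hq.2] : (0:ℝ) ≤ 1 - q)
  rw [e1, e2]; ring

private lemma hell_ge {p q : ℝ} (hp : p ∈ Set.Ioo (0:ℝ) 1) (hq : q ∈ Set.Ioo (0:ℝ) 1) :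
    (p - q) ^ 2 / 4 ≤ 1 - (Real.sqrt (p * q) + Real.sqrt ((1 - p) * (1 - q))) := by
  rw [hell_eq hp hq]
  have h1 := sqrt_term_ge hp hq
  have h2 := sqrt_term_ge (p := 1 - p) (q := 1 - q)
    ⟨by linarith [hp.2], by linarith [hp.1]⟩ ⟨by linarith [hq.2], by linarith [hq.1]⟩
  have : ((1:ℝ) - p - (1 - q)) ^ 2 = (p - q) ^ 2 := by ring
  rw [this] at h2
  linarith

private lemma hell_le {p q : ℝ} (hp : p ∈ Set.Ioo (0:ℝ) 1) (hq : q ∈ Set.Ioo (0:ℝ) 1) :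
    1 - (Real.sqrt (p * q) + Real.sqrt ((1 - p) * (1 - q)))
      ≤ (p - q) ^ 2 / ((p + q) * (2 - p - q)) := by
  rw [hell_eq hp hq]
  have h1 := sqrt_term_le hp hq
  have h2 := sqrt_term_le (p := 1 - p) (q := 1 - q)
    ⟨by linarith [hp.2], by linarith [hp.1]⟩ ⟨by linarith [hq.2], by linarith [hq.1]⟩
  have e : ((1:ℝ) - p - (1 - q)) ^ 2 = (p - q) ^ 2 := by ring
  rw [e] at h2
  have hpq : (0:ℝ) < p + q := by linarith [hp.1, hq.1]
  have hpq2 : (0:ℝ) < 2 - p - q := by linarith [hp.2, hq.2]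
  have e2 : (p - q) ^ 2 / (p + q) + (p - q) ^ 2 / ((1 - p) + (1 - q))
      = 2 * ((p - q) ^ 2 / ((p + q) * (2 - p - q))) := by
    have h3' : ((1:ℝ) - p + (1 - q)) = 2 - p - q := by ring
    rw [h3', div_add_div _ _ hpq.ne' hpq2.ne',
      show (p-q)^2*(2-p-q) + (p+q)*(p-q)^2 = 2*(p-q)^2 by ring, mul_div_assoc]
  linarith [h1, h2, e2]

private lemma hell_nonneg {p q : ℝ} (hp : p ∈ Set.Ioo (0:ℝ) 1) (hq : q ∈ Set.Ioo (0:ℝ) 1) :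
    0 ≤ 1 - (Real.sqrt (p * q) + Real.sqrt ((1 - p) * (1 - q))) := by
  rw [hell_eq hp hq]; positivity

private lemma hell_le_one {p q : ℝ} :
    1 - (Real.sqrt (p * q) + Real.sqrt ((1 - p) * (1 - q))) ≤ 1 := by
  have := Real.sqrt_nonneg (p * q)
  have := Real.sqrt_nonneg ((1 - p) * (1 - q))
  linarith

set_option maxHeartbeats 2000000 in
theorem stmt2 : ∃ c : ℝ, c ∈ Set.Ioo (0:ℝ) 1 ∧
    ∀ (n : ℕ), 1 ≤ n → ∀ (p q : Fin n → ℝ),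
      (∀ i, p i ∈ Set.Ioo (0:ℝ) 1) → (∀ i, q i ∈ Set.Ioo (0:ℝ) 1) →
      c * min 1 ((∑ i, (p i - q i) ^ 2) ^ 2) ≤ (l1Dist (prodDist p) (prodDist q)) ^ 2 ∧
      (l1Dist (prodDist p) (prodDist q)) ^ 2
        ≤ 8 * ∑ i, (p i - q i) ^ 2 / ((p i + q i) * (2 - p i - q i)) := by
  refine ⟨1/16, ⟨by norm_num, by norm_num⟩, ?_⟩
  intro n hn p q hp hq
  classical
  set P := prodDist p with hP
  set Q := prodDist q with hQ
  -- coordinate factor functions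
  set fP : Fin n → Bool → ℝ := fun i b => if b then p i else 1 - p i with hfP
  set fQ : Fin n → Bool → ℝ := fun i b => if b then q i else 1 - q i with hfQ
  have hfPnn : ∀ i b, 0 ≤ fP i b := by
    intro i b; cases b <;> simp [hfP] <;> linarith [(hp i).1, (hp i).2]
  have hfQnn : ∀ i b, 0 ≤ fQ i b := by
    intro i b; cases b <;> simp [hfQ] <;> linarith [(hq i).1, (hq i).2]
  have hPx : ∀ x, P x = ∏ i, fP i (x i) := fun x => rfl
  have hQx : ∀ x, Q x = ∏ i, fQ i (x i) := fun x => rfl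
  have hPnn : ∀ x, 0 ≤ P x := fun x =>
    Finset.prod_nonneg fun i _ => hfPnn i (x i)
  have hQnn : ∀ x, 0 ≤ Q x := fun x =>
    Finset.prod_nonneg fun i _ => hfQnn i (x i)
  -- generic sum-product swap
  have sum_prod : ∀ f : Fin n → Bool → ℝ,
      ∑ x : Fin n → Bool, ∏ i, f i (x i) = ∏ i, (f i true + f i false) := by
    intro f
    rw [← Fintype.prod_sum]
    exact Finset.prod_congr rfl fun i _ => by rw [Fintype.sum_bool]
  have sumP : ∑ x, P x = 1 := by
    simp only [hPx, sum_prod fP]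
    simp [hfP]
  have sumQ : ∑ x, Q x = 1 := by
    simp only [hQx, sum_prod fQ]
    simp [hfQ]
  -- Bhattacharyya coefficient
  set a : Fin n → ℝ := fun i => Real.sqrt (p i * q i) + Real.sqrt ((1 - p i) * (1 - q i)) with ha
  set B : ℝ := ∏ i, a i with hB
  have sumPQ : ∑ x, Real.sqrt (P x * Q x) = B := by
    have e : ∀ x : Fin n → Bool, Real.sqrt (P x * Q x) = ∏ i, Real.sqrt (fP i (x i) * fQ i (x i)) := by
      intro x
      rw [hPx, hQx, ← Finset.prod_mul_distrib]
      exact sqrt_prod'' _ _ fun i _ => mul_nonneg (hfPnn i (x i)) (hfQnn i (x i))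
    rw [Finset.sum_congr rfl fun x _ => e x,
      sum_prod (fun i b => Real.sqrt (fP i b * fQ i b))]
    exact Finset.prod_congr rfl fun i _ => by simp [hfP, hfQ, ha]
  -- a i bounds
  have hhge : ∀ i, (p i - q i) ^ 2 / 4 ≤ 1 - a i := fun i => hell_ge (hp i) (hq i)
  have hhle : ∀ i, 1 - a i ≤ (p i - q i) ^ 2 / ((p i + q i) * (2 - p i - q i)) :=
    fun i => hell_le (hp i) (hq i)
  have hann : ∀ i, 0 ≤ a i := fun i =>
    add_nonneg (Real.sqrt_nonneg _) (Real.sqrt_nonneg _)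
  have hale : ∀ i, a i ≤ 1 := fun i => by
    have := hell_nonneg (hp i) (hq i)
    show Real.sqrt (p i * q i) + Real.sqrt ((1 - p i) * (1 - q i)) ≤ 1
    linarith
  have hB1 : B ≤ 1 := Finset.prod_le_one (fun i _ => hann i) (fun i _ => hale i)
  have hB0 : 0 ≤ B := Finset.prod_nonneg fun i _ => hann i
  -- square-root vectors
  set u : (Fin n → Bool) → ℝ := fun x => Real.sqrt (P x) with hu
  set v : (Fin n → Bool) → ℝ := fun x => Real.sqrt (Q x) with hv
  have hu2 : ∀ x, u x ^ 2 = P x := fun x => Real.sq_sqrt (hPnn x)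
  have hv2 : ∀ x, v x ^ 2 = Q x := fun x => Real.sq_sqrt (hQnn x)
  have huv : ∀ x, u x * v x = Real.sqrt (P x * Q x) := fun x =>
    (Real.sqrt_mul (hPnn x) (Q x)).symm
  have hunn : ∀ x, 0 ≤ u x := fun x => Real.sqrt_nonneg _
  have hvnn : ∀ x, 0 ≤ v x := fun x => Real.sqrt_nonneg _
  have sum_sub_sq : ∑ x, (u x - v x) ^ 2 = 2 - 2 * B := by
    have e : ∀ x : Fin n → Bool, (u x - v x) ^ 2
        = P x + Q x - 2 * Real.sqrt (P x * Q x) := by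
      intro x
      have := hu2 x; have := hv2 x; have := huv x
      nlinarith [hu2 x, hv2 x, huv x]
    rw [Finset.sum_congr rfl fun x _ => e x]
    rw [Finset.sum_sub_distrib, Finset.sum_add_distrib, ← Finset.mul_sum, sumP, sumQ, sumPQ]
    ring
  have sum_add_sq : ∑ x, (u x + v x) ^ 2 = 2 + 2 * B := by
    have e : ∀ x : Fin n → Bool, (u x + v x) ^ 2
        = P x + Q x + 2 * Real.sqrt (P x * Q x) := by
      intro x
      nlinarith [hu2 x, hv2 x, huv x]
    rw [Finset.sum_congr rfl fun x _ => e x]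
    rw [Finset.sum_add_distrib, Finset.sum_add_distrib, ← Finset.mul_sum, sumP, sumQ, sumPQ]
    ring
  have l1eq : l1Dist P Q = ∑ x, |u x - v x| * (u x + v x) := by
    unfold l1Dist
    refine Finset.sum_congr rfl fun x _ => ?_
    have e : P x - Q x = (u x - v x) * (u x + v x) := by
      nlinarith [hu2 x, hv2 x]
    rw [e, abs_mul, abs_of_nonneg (add_nonneg (hunn x) (hvnn x))]
  -- Upper bound
  have ub : (l1Dist P Q) ^ 2 ≤ 8 * (1 - B) := by
    rw [l1eq]
    have cs := Finset.sum_mul_sq_le_sq_mul_sq Finset.univ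
      (fun x => |u x - v x|) (fun x => u x + v x)
    have e1 : ∑ x, |u x - v x| ^ 2 = 2 - 2 * B := by
      rw [← sum_sub_sq]; exact Finset.sum_congr rfl fun x _ => sq_abs _
    rw [e1, sum_add_sq] at cs
    nlinarith [cs, hB1, hB0]
  -- Lower bound on L1
  have lb1 : 2 - 2 * B ≤ l1Dist P Q := by
    rw [l1eq, ← sum_sub_sq]
    refine Finset.sum_le_sum fun x _ => ?_
    have habs : |u x - v x| ≤ u x + v x := by
      rw [abs_sub_le_iff]; constructor <;> linarith [hunn x, hvnn x]
    calc (u x - v x) ^ 2 = |u x - v x| * |u x - v x| := by rw [← sq_abs]; ring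
      _ ≤ |u x - v x| * (u x + v x) := by
          exact mul_le_mul_of_nonneg_left habs (abs_nonneg _)
  set S : ℝ := ∑ i, (1 - a i) with hS
  have hS0 : 0 ≤ S := Finset.sum_nonneg fun i _ => by linarith [hale i]
  have hBS : B * (1 + S) ≤ 1 := by
    have h1 : 1 + S ≤ ∏ i, (1 + (1 - a i)) :=
      one_add_sum_le_prod' _ _ fun i _ => by linarith [hale i]
    have h2 : B = ∏ i, (1 - (1 - a i)) := by
      rw [hB]; exact Finset.prod_congr rfl fun i _ => by ring
    have h3 : (∏ i, (1 - (1 - a i))) * ∏ i, (1 + (1 - a i)) = ∏ i, (1 - (1 - a i)^2) := by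
      rw [← Finset.prod_mul_distrib]
      exact Finset.prod_congr rfl fun i _ => by ring
    have h4 : ∏ i, (1 - (1 - a i)^2) ≤ 1 :=
      Finset.prod_le_one
        (fun i _ => by nlinarith [hann i, hale i]) (fun i _ => by nlinarith [sq_nonneg (1 - a i)])
    calc B * (1 + S) ≤ B * ∏ i, (1 + (1 - a i)) := by
          exact mul_le_mul_of_nonneg_left h1 hB0
      _ = ∏ i, (1 - (1 - a i)^2) := by rw [h2] at *; rw [h3]
      _ ≤ 1 := h4
  have lminS : min 1 S ≤ l1Dist P Q := by
    rcases le_total S 1 with hc | hc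
    · have : 2 - 2 * B ≥ S := by nlinarith [hBS, hS0]
      rw [min_eq_right hc]; linarith [lb1]
    · have : 2 - 2 * B ≥ 1 := by nlinarith [hBS, hB0]
      rw [min_eq_left hc]; linarith [lb1]
  set D : ℝ := ∑ i, (p i - q i) ^ 2 with hD
  have hD0 : 0 ≤ D := Finset.sum_nonneg fun i _ => sq_nonneg _
  have hSD : D / 4 ≤ S := by
    rw [hS, hD, Finset.sum_div]
    exact Finset.sum_le_sum fun i _ => hhge i
  have lmin : min 1 D / 4 ≤ l1Dist P Q := by
    refine le_trans ?_ lminS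
    rcases le_total D 1 with hc | hc
    · rw [min_eq_right hc]
      exact le_min (by linarith) (by linarith)
    · rw [min_eq_left hc]
      exact le_min (by norm_num) (by linarith)
  have l1nn : 0 ≤ l1Dist P Q := Finset.sum_nonneg fun x _ => abs_nonneg _
  have lbfinal : 1/16 * min 1 (D ^ 2) ≤ (l1Dist P Q) ^ 2 := by
    have hmm : min 1 (D ^ 2) = (min 1 D) ^ 2 := by
      rcases le_total D 1 with hc | hc
      · rw [min_eq_right hc, min_eq_right (by nlinarith)]
      · rw [min_eq_left hc, min_eq_left (by nlinarith), one_pow]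
    rw [hmm]
    have hmnn : 0 ≤ min 1 D := le_min (by norm_num) hD0
    nlinarith [lmin, hmnn, l1nn]
  refine ⟨lbfinal, ?_⟩
  calc (l1Dist P Q) ^ 2 ≤ 8 * (1 - B) := ub
    _ ≤ 8 * S := by
        have h2 : B = ∏ i, (1 - (1 - a i)) := by
          rw [hB]; exact Finset.prod_congr rfl fun i _ => by ring
        have := one_sub_sum_le_prod' Finset.univ (fun i => 1 - a i)
          (fun i _ => by show (0:ℝ) ≤ 1 - a i; linarith [hale i])
          (fun i _ => by show (1:ℝ) - a i ≤ 1; linarith [hann i])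
        rw [← h2, ← hS] at this
        linarith
    _ ≤ 8 * ∑ i, (p i - q i) ^ 2 / ((p i + q i) * (2 - p i - q i)) := by
        have := Finset.sum_le_sum (f := fun i => 1 - a i)
          (g := fun i => (p i - q i) ^ 2 / ((p i + q i) * (2 - p i - q i)))
          (fun i (_ : i ∈ Finset.univ) => hhle i)
        rw [← hS] at this
        linarith
end

section
/- Fix a DAG structure on [n] with topologically ordered vertices, i.e., a parent map assigning to each i ∈ [n] a set Par(i) ⊆ {1,...,i−1}. Let P and Q be Bayes nets with this same structure, with conditional probability tables (p_k) and (q_k) indexed by pairs k = (i,a) with i ∈ [n] and a ∈ {0,1}^{|Par(i)|}, where p_k ∈ [0,1] and q_k ∈ (0,1) for all k. Then 2·∑_k P(Π_k)·(p_k − q_k)² ≤ D(P‖Q) ≤ ∑_k P(Π_k)·(p_k − q_k)²/(q_k(1 − q_k)), where the sums range over all pairs k = (i,a). -/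
/-- The Bayes net distribution on `{0,1}^n` with (topologically sorted) parent sets `Par`
and conditional probability table `p`, where `p i a` is the probability that coordinate `i`
equals `1` given that the parents of `i` take values `a`. -/
noncomputable def bnDist {n : ℕ} (Par : Fin n → Finset (Fin n))
    (p : (i : Fin n) → ({j // j ∈ Par i} → Bool) → ℝ) : (Fin n → Bool) → ℝ :=
  fun x => ∏ i, if x i then p i (fun j => x j.1) else 1 - p i (fun j => x j.1)

/-- The parental configuration event `Π_{i,a} = {x : x restricted to Par i equals a}`. -/
noncomputable def configSet {n : ℕ} (Par : Fin n → Finset (Fin n)) (i : Fin n)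
    (a : {j // j ∈ Par i} → Bool) : Finset (Fin n → Bool) :=
  Finset.univ.filter (fun x => ∀ j : {j // j ∈ Par i}, x j.1 = a j)

/-- KL divergence (natural log) between two distributions on a finite set;
terms with `P x = 0` contribute `0` (automatic since `0 * log 0 = 0`). -/
noncomputable def klDiv {α : Type*} [Fintype α] (P Q : α → ℝ) : ℝ :=
  ∑ x, P x * Real.log (P x / Q x)

/-
By the chain rule, `D(P‖Q) = ∑_{i,a} P(Π_{i,a}) · d(p_{i,a} ‖ q_{i,a})`, where `d` is the KL
divergence between Bernoulli laws. The chain rule rests on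
`P(Π_{i,a} ∩ {x_i = b}) = Bern(p_{i,a})(b) · P(Π_{i,a})`, obtained by summing out the coordinates
after `i` one at a time: flipping coordinate `M` fixes every factor of index `< M` (parents come
earlier) and turns the `M`-th factor into its complement.

Both bounds are then termwise. The upper one is `d(p‖q) ≤ (p - q)² / (q(1 - q))`, from
`log x ≤ x - 1`. The lower one is Pinsker's inequality `2(p - q)² ≤ d(p‖q)`: the derivative of
`t ↦ d(p‖t) - 2(p - t)²` is `(t - p)(1 / (t(1 - t)) - 4)`, which has the sign of `t - p`.
-/

open Real

section Bernoulli

open Set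

def bern (r : ℝ) (b : Bool) : ℝ := if b then r else 1 - r

lemma bern_nonneg {r : ℝ} (hr : r ∈ Icc 0 1) (b : Bool) : 0 ≤ bern r b := by
  cases b
  · exact sub_nonneg.2 hr.2
  · exact hr.1

lemma bern_pos {r : ℝ} (hr : r ∈ Ioo 0 1) (b : Bool) : 0 < bern r b := by
  cases b
  · exact sub_pos.2 hr.2
  · exact hr.1

noncomputable def binKL (p q : ℝ) : ℝ := p * log (p / q) + (1 - p) * log ((1 - p) / (1 - q))

lemma mul_log_div_eq (p : ℝ) {q : ℝ} (hq : q ≠ 0) : p * log (p / q) = p * log p - p * log q := by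
  rcases eq_or_ne p 0 with rfl | hp
  · simp
  · rw [log_div hp hq, mul_sub]

lemma binKL_eq (p : ℝ) {q : ℝ} (hq : q ∈ Ioo 0 1) :
    binKL p q = p * log p + (1 - p) * log (1 - p) - p * log q - (1 - p) * log (1 - q) := by
  rw [binKL, mul_log_div_eq p hq.1.ne', mul_log_div_eq (1 - p) (sub_pos.2 hq.2).ne']
  ring

lemma binKL_self {p : ℝ} (hp : p ∈ Ioo 0 1) : binKL p p = 0 := by
  simp [binKL, div_self hp.1.ne', div_self (sub_pos.2 hp.2).ne']

lemma continuous_binKL_left {q : ℝ} (hq : q ∈ Ioo 0 1) : Continuous fun p => binKL p q := by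
  simp_rw [binKL_eq _ hq]
  have := continuous_mul_log
  fun_prop

lemma hasDerivAt_binKL_right (p : ℝ) {t : ℝ} (ht : t ∈ Ioo 0 1) :
    HasDerivAt (binKL p) ((t - p) / (t * (1 - t))) t := by
  have ht0 : t ≠ 0 := ht.1.ne'
  have ht1 : 1 - t ≠ 0 := (sub_pos.2 ht.2).ne'
  have hlog := (((hasDerivAt_log ht0).const_mul p).const_sub
    (p * log p + (1 - p) * log (1 - p))).sub
      ((((hasDerivAt_id' t).const_sub 1).log ht1).const_mul (1 - p))
  refine (hlog.congr_deriv ?_).congr_of_eventuallyEq ?_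
  · field_simp
    ring
  · filter_upwards [isOpen_Ioo.mem_nhds ht] with s hs using binKL_eq p hs

lemma binKL_eq_sum_bern (p q : ℝ) :
    binKL p q = ∑ b, bern p b * log (bern p b / bern q b) := by
  simp [binKL, bern]

lemma binKL_le_chiSq {p q : ℝ} (hp : p ∈ Icc 0 1) (hq : q ∈ Ioo 0 1) :
    binKL p q ≤ (p - q) ^ 2 / (q * (1 - q)) := by
  obtain ⟨hp0, hp1⟩ := hp
  obtain ⟨hq0, hq1⟩ := hq
  have hq1' : 0 < 1 - q := sub_pos.2 hq1
  have key : ∀ {r s : ℝ}, 0 ≤ r → 0 < s → r * log (r / s) ≤ r * (r / s - 1) := fun hr hs => by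
    rcases hr.eq_or_lt with rfl | hr
    · simp
    · exact mul_le_mul_of_nonneg_left (log_le_sub_one_of_pos (div_pos hr hs)) hr.le
  calc binKL p q ≤ p * (p / q - 1) + (1 - p) * ((1 - p) / (1 - q) - 1) :=
        add_le_add (key hp0 hq0) (key (sub_nonneg.2 hp1) hq1')
    _ = (p - q) ^ 2 / (q * (1 - q)) := by
        field_simp
        ring

lemma two_mul_sq_le_binKL_of_mem_Ioo {p t : ℝ} (hp : p ∈ Ioo 0 1) (ht : t ∈ Ioo 0 1) :
    2 * (p - t) ^ 2 ≤ binKL p t := by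
  set φ : ℝ → ℝ := fun s => binKL p s - 2 * (p - s) ^ 2
  have hφ : ∀ s ∈ Ioo (0 : ℝ) 1, HasDerivAt φ ((s - p) * (1 / (s * (1 - s)) - 4)) s := by
    intro s hs
    have hs' : s * (1 - s) ≠ 0 := (mul_pos hs.1 (sub_pos.2 hs.2)).ne'
    refine ((hasDerivAt_binKL_right p hs).sub
      ((((hasDerivAt_id' s).const_sub p).pow 2).const_mul 2)).congr_deriv ?_
    field_simp
    ring
  have hweight : ∀ s ∈ Ioo (0 : ℝ) 1, 0 ≤ 1 / (s * (1 - s)) - 4 := by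
    intro s hs
    rw [sub_nonneg, le_div_iff₀ (mul_pos hs.1 (sub_pos.2 hs.2))]
    nlinarith [sq_nonneg (2 * s - 1)]
  have hdiff : DifferentiableOn ℝ φ (Ioo 0 1) := fun s hs =>
    (hφ s hs).differentiableAt.differentiableWithinAt
  have hderiv : ∀ s ∈ Ioo (0 : ℝ) 1, deriv φ s = (s - p) * (1 / (s * (1 - s)) - 4) :=
    fun s hs => (hφ s hs).deriv
  suffices 0 ≤ φ t by simpa [φ] using this
  have hφp : φ p = 0 := by simp [φ, binKL_self hp]
  rcases le_total t p with htp | hpt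
  · have hsub : Ioc 0 p ⊆ Ioo 0 1 := fun s hs => ⟨hs.1, hs.2.trans_lt hp.2⟩
    have hanti : AntitoneOn φ (Ioc 0 p) := by
      refine antitoneOn_of_deriv_nonpos (convex_Ioc 0 p) (hdiff.mono hsub).continuousOn
        ?_ fun s hs => ?_ <;> rw [interior_Ioc] at *
      · exact hdiff.mono (Ioo_subset_Ioc_self.trans hsub)
      · rw [hderiv s (hsub (Ioo_subset_Ioc_self hs))]
        exact mul_nonpos_of_nonpos_of_nonneg (sub_nonpos.2 hs.2.le)
          (hweight s (hsub (Ioo_subset_Ioc_self hs)))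
    simpa [hφp] using hanti ⟨ht.1, htp⟩ ⟨hp.1, le_rfl⟩ htp
  · have hsub : Ico p 1 ⊆ Ioo 0 1 := fun s hs => ⟨hp.1.trans_le hs.1, hs.2⟩
    have hmono : MonotoneOn φ (Ico p 1) := by
      refine monotoneOn_of_deriv_nonneg (convex_Ico p 1) (hdiff.mono hsub).continuousOn
        ?_ fun s hs => ?_ <;> rw [interior_Ico] at *
      · exact hdiff.mono (Ioo_subset_Ico_self.trans hsub)
      · rw [hderiv s (hsub (Ioo_subset_Ico_self hs))]
        exact mul_nonneg (sub_nonneg.2 hs.1.le) (hweight s (hsub (Ioo_subset_Ico_self hs)))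
    simpa [hφp] using hmono ⟨le_rfl, hp.2⟩ ⟨hpt, ht.2⟩ hpt

lemma two_mul_sq_le_binKL {p q : ℝ} (hp : p ∈ Icc 0 1) (hq : q ∈ Ioo 0 1) :
    2 * (p - q) ^ 2 ≤ binKL p q := by
  have hclosed : IsClosed {r : ℝ | 2 * (r - q) ^ 2 ≤ binKL r q} :=
    isClosed_le (by fun_prop) (continuous_binKL_left hq)
  rw [← closure_Ioo zero_ne_one] at hp
  exact hclosed.closure_subset_iff.2 (fun r hr => two_mul_sq_le_binKL_of_mem_Ioo hr hq) hp

end Bernoulli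

section BayesNet

open Finset

variable {n : ℕ} {Par : Fin n → Finset (Fin n)}

def bnFactor (Par : Fin n → Finset (Fin n)) (p : (i : Fin n) → ({j // j ∈ Par i} → Bool) → ℝ)
    (i : Fin n) (x : Fin n → Bool) : ℝ :=
  bern (p i fun j => x j.1) (x i)

def bnPartial (Par : Fin n → Finset (Fin n)) (p : (i : Fin n) → ({j // j ∈ Par i} → Bool) → ℝ)
    (m : ℕ) (x : Fin n → Bool) : ℝ :=
  ∏ j : Fin n with j.val < m, bnFactor Par p j x

def flipAt (M : Fin n) (x : Fin n → Bool) : Fin n → Bool := Function.update x M (!x M)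

@[simp] lemma flipAt_apply_self (M : Fin n) (x : Fin n → Bool) : flipAt M x M = !x M := by
  simp [flipAt]

lemma flipAt_apply_of_ne {M j : Fin n} (x : Fin n → Bool) (h : j ≠ M) : flipAt M x j = x j :=
  Function.update_of_ne h _ _

@[simp] lemma flipAt_flipAt (M : Fin n) (x : Fin n → Bool) : flipAt M (flipAt M x) = x := by
  funext j
  rcases eq_or_ne j M with rfl | h
  · simp
  · rw [flipAt_apply_of_ne _ h, flipAt_apply_of_ne _ h]

lemma sum_flipAt {M : Fin n} {S T : Finset (Fin n → Bool)} (hST : ∀ x ∈ S, flipAt M x ∈ T)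
    (hTS : ∀ x ∈ T, flipAt M x ∈ S) (f : (Fin n → Bool) → ℝ) :
    ∑ x ∈ S, f (flipAt M x) = ∑ x ∈ T, f x :=
  sum_nbij' (flipAt M) (flipAt M) hST hTS (fun x _ => flipAt_flipAt M x)
    (fun x _ => flipAt_flipAt M x) fun _ _ => rfl

variable (p : (i : Fin n) → ({j // j ∈ Par i} → Bool) → ℝ)

lemma bnDist_eq_prod_bnFactor (x : Fin n → Bool) : bnDist Par p x = ∏ i, bnFactor Par p i x :=
  rfl

lemma bnDist_nonneg (hp : ∀ i a, p i a ∈ Set.Icc (0 : ℝ) 1) (x : Fin n → Bool) :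
    0 ≤ bnDist Par p x :=
  prod_nonneg fun i _ => bern_nonneg (hp i _) (x i)

lemma bnFactor_of_mem_configSet {i : Fin n} {a : {j // j ∈ Par i} → Bool} {x : Fin n → Bool}
    (hx : x ∈ configSet Par i a) : bnFactor Par p i x = bern (p i a) (x i) := by
  simp only [configSet, mem_filter, mem_univ, true_and] at hx
  simp only [bnFactor, funext hx]

lemma bnPartial_succ (M : Fin n) (x : Fin n → Bool) :
    bnPartial Par p (M + 1) x = bnFactor Par p M x * bnPartial Par p M x := by
  have : univ.filter (fun j : Fin n => j.val < M + 1)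
      = insert M (univ.filter fun j : Fin n => j.val < M) := by
    ext j
    simp only [mem_filter, mem_univ, true_and, mem_insert, Fin.ext_iff]
    omega
  rw [bnPartial, this, prod_insert (by simp)]
  rfl

lemma bnPartial_of_le {m : ℕ} (hm : n ≤ m) (x : Fin n → Bool) :
    bnPartial Par p m x = bnDist Par p x := by
  rw [bnPartial, filter_true_of_mem fun j _ => j.2.trans_le hm]
  rfl

lemma bnFactor_pos {q : (i : Fin n) → ({j // j ∈ Par i} → Bool) → ℝ}
    (hq : ∀ i a, q i a ∈ Set.Ioo (0 : ℝ) 1) (i : Fin n) (x : Fin n → Bool) :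
    0 < bnFactor Par q i x :=
  bern_pos (hq i _) (x i)

lemma mul_log_bnDist_div {q : (i : Fin n) → ({j // j ∈ Par i} → Bool) → ℝ}
    (hq : ∀ i a, q i a ∈ Set.Ioo (0 : ℝ) 1) (x : Fin n → Bool) :
    bnDist Par p x * log (bnDist Par p x / bnDist Par q x)
      = ∑ i, bnDist Par p x * log (bnFactor Par p i x / bnFactor Par q i x) := by
  rcases eq_or_ne (bnDist Par p x) 0 with hP | hP
  · simp [hP]
  have hfac : ∀ i, bnFactor Par p i x ≠ 0 := by
    rw [bnDist_eq_prod_bnFactor, prod_ne_zero_iff] at hP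
    exact fun i => hP i (mem_univ i)
  rw [← mul_sum, bnDist_eq_prod_bnFactor p, bnDist_eq_prod_bnFactor q, ← prod_div_distrib,
    log_prod fun i _ => div_ne_zero (hfac i) (bnFactor_pos hq i x).ne']

lemma sum_eq_sum_configSet_filter (i : Fin n) (f : (Fin n → Bool) → ℝ) :
    ∑ x, f x = ∑ a, ∑ b, ∑ x ∈ configSet Par i a with x i = b, f x := by
  rw [← sum_fiberwise univ fun x (j : {j // j ∈ Par i}) => x j.1]
  refine sum_congr rfl fun a _ => ?_
  rw [← sum_fiberwise _ (· i)]
  congr! 3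
  simp [configSet, funext_iff]

variable (hPar : ∀ i : Fin n, ∀ j ∈ Par i, j < i)
include hPar

lemma bnFactor_flipAt_of_lt {M j : Fin n} (hj : j < M) (x : Fin n → Bool) :
    bnFactor Par p j (flipAt M x) = bnFactor Par p j x := by
  have hpar : (fun k : {k // k ∈ Par j} => flipAt M x k.1) = fun k => x k.1 :=
    funext fun k => flipAt_apply_of_ne x ((hPar j k k.2).trans hj).ne
  simp only [bnFactor, hpar, flipAt_apply_of_ne x hj.ne]

lemma bnFactor_flipAt_self (M : Fin n) (x : Fin n → Bool) :
    bnFactor Par p M (flipAt M x) = 1 - bnFactor Par p M x := by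
  have hpar : (fun k : {k // k ∈ Par M} => flipAt M x k.1) = fun k => x k.1 :=
    funext fun k => flipAt_apply_of_ne x (hPar M k k.2).ne
  cases h : x M <;> simp [bnFactor, bern, hpar, h]

lemma bnPartial_flipAt {m : ℕ} {M : Fin n} (hm : m ≤ M) (x : Fin n → Bool) :
    bnPartial Par p m (flipAt M x) = bnPartial Par p m x :=
  prod_congr rfl fun _ hj =>
    bnFactor_flipAt_of_lt p hPar (Fin.lt_def.2 ((mem_filter.1 hj).2.trans_le hm)) x

lemma two_mul_sum_bnPartial_succ (M : Fin n) {S : Finset (Fin n → Bool)}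
    (hS : ∀ x ∈ S, flipAt M x ∈ S) :
    2 * ∑ x ∈ S, bnPartial Par p (M + 1) x = ∑ x ∈ S, bnPartial Par p M x := by
  have hflip := sum_flipAt hS hS fun x => bnFactor Par p M x * bnPartial Par p M x
  simp only [bnFactor_flipAt_self p hPar, bnPartial_flipAt p hPar le_rfl] at hflip
  simp only [bnPartial_succ, two_mul]
  nth_rw 1 [← hflip]
  rw [← sum_add_distrib]
  exact sum_congr rfl fun x _ => by ring

lemma two_pow_mul_sum_bnDist {m : ℕ} (hm : m ≤ n) {S : Finset (Fin n → Bool)}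
    (hS : ∀ M : Fin n, m ≤ M → ∀ x ∈ S, flipAt M x ∈ S) :
    2 ^ (n - m) * ∑ x ∈ S, bnDist Par p x = ∑ x ∈ S, bnPartial Par p m x := by
  induction hk : n - m generalizing m with
  | zero => simp [bnPartial_of_le p (Nat.sub_eq_zero_iff_le.1 hk)]
  | succ k ih =>
    have hmn : m < n := by omega
    have hM := two_mul_sum_bnPartial_succ p hPar ⟨m, hmn⟩ (hS _ le_rfl)
    rw [← hM, pow_succ', mul_assoc, ih hmn (fun M hM => hS M (by omega)) (by omega)]

lemma sum_configSet_filter_bnDist (i : Fin n) (a : {j // j ∈ Par i} → Bool) (b : Bool) :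
    ∑ x ∈ configSet Par i a with x i = b, bnDist Par p x
      = bern (p i a) b * ∑ x ∈ configSet Par i a, bnDist Par p x := by
  set S := configSet Par i a
  have hS : ∀ M : Fin n, (i : ℕ) ≤ M → ∀ x ∈ S, flipAt M x ∈ S := by
    intro M hM x hx
    simp only [S, configSet, mem_filter, mem_univ, true_and] at hx ⊢
    intro j
    rw [flipAt_apply_of_ne x ((hPar i j j.2).trans_le (Fin.le_def.2 hM)).ne, hx]
  have hT : ∀ M : Fin n, (i : ℕ) + 1 ≤ M → ∀ x ∈ S.filter (· i = b),
      flipAt M x ∈ S.filter (· i = b) := by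
    intro M hM x hx
    rw [mem_filter] at hx ⊢
    exact ⟨hS M (by omega) x hx.1, by rw [flipAt_apply_of_ne x (Fin.ne_of_lt (by omega)), hx.2]⟩
  have hTT : ∑ x ∈ S with x i = b, bnPartial Par p i x
      = ∑ x ∈ S with ¬x i = b, bnPartial Par p i x := by
    calc ∑ x ∈ S with x i = b, bnPartial Par p i x
        = ∑ x ∈ S with x i = b, bnPartial Par p i (flipAt i x) :=
          sum_congr rfl fun x _ => (bnPartial_flipAt p hPar le_rfl x).symm
      _ = ∑ x ∈ S with ¬x i = b, bnPartial Par p i x :=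
          sum_flipAt (fun x hx => ?_) (fun x hx => ?_) _
    all_goals
      rw [mem_filter] at hx ⊢
      exact ⟨hS i le_rfl x hx.1, by simpa [Bool.eq_not] using hx.2⟩
  have hhalf : ∑ x ∈ S, bnPartial Par p i x
      = 2 * ∑ x ∈ S with x i = b, bnPartial Par p i x := by
    rw [← sum_filter_add_sum_filter_not S (· i = b), ← hTT, two_mul]
  have hcond : 2 ^ (n - (i + 1)) * ∑ x ∈ S with x i = b, bnDist Par p x
      = bern (p i a) b * ∑ x ∈ S with x i = b, bnPartial Par p i x := by
    rw [two_pow_mul_sum_bnDist p hPar i.2 hT, mul_sum]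
    refine sum_congr rfl fun x hx => ?_
    rw [mem_filter] at hx
    rw [bnPartial_succ, bnFactor_of_mem_configSet p hx.1, hx.2]
  have hmarg := two_pow_mul_sum_bnDist p hPar i.2.le hS
  have hpow : (2 : ℝ) ^ (n - i) = 2 * 2 ^ (n - (i + 1)) := by
    rw [← pow_succ']
    congr 1
    omega
  refine mul_left_cancel₀ (pow_ne_zero (n - i) (two_ne_zero : (2 : ℝ) ≠ 0)) ?_
  calc 2 ^ (n - i) * ∑ x ∈ S with x i = b, bnDist Par p x
      = 2 * (2 ^ (n - (i + 1)) * ∑ x ∈ S with x i = b, bnDist Par p x) := by rw [hpow]; ring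
    _ = bern (p i a) b * ∑ x ∈ S, bnPartial Par p i x := by rw [hcond, hhalf]; ring
    _ = 2 ^ (n - i) * (bern (p i a) b * ∑ x ∈ S, bnDist Par p x) := by rw [← hmarg]; ring

lemma klDiv_bnDist_eq_sum_binKL (q : (i : Fin n) → ({j // j ∈ Par i} → Bool) → ℝ)
    (hq : ∀ i a, q i a ∈ Set.Ioo (0 : ℝ) 1) :
    klDiv (bnDist Par p) (bnDist Par q)
      = ∑ i, ∑ a, (∑ x ∈ configSet Par i a, bnDist Par p x) * binKL (p i a) (q i a) := by
  calc klDiv (bnDist Par p) (bnDist Par q)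
      = ∑ i, ∑ x, bnDist Par p x * log (bnFactor Par p i x / bnFactor Par q i x) := by
        rw [klDiv, sum_congr rfl fun x _ => mul_log_bnDist_div p hq x, sum_comm]
    _ = ∑ i, ∑ a, ∑ b, ∑ x ∈ configSet Par i a with x i = b,
          bnDist Par p x * log (bern (p i a) b / bern (q i a) b) := by
        refine sum_congr rfl fun i _ => ?_
        rw [sum_eq_sum_configSet_filter i]
        refine sum_congr rfl fun a _ => sum_congr rfl fun b _ => sum_congr rfl fun x hx => ?_
        rw [mem_filter] at hx
        rw [bnFactor_of_mem_configSet p hx.1, bnFactor_of_mem_configSet q hx.1, hx.2]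
    _ = _ := by
        refine sum_congr rfl fun i _ => sum_congr rfl fun a _ => ?_
        simp only [← sum_mul, sum_configSet_filter_bnDist p hPar]
        rw [binKL_eq_sum_bern, mul_sum]
        exact sum_congr rfl fun b _ => by ring

end BayesNet

theorem stmt3 (n : ℕ) (Par : Fin n → Finset (Fin n))
    (hPar : ∀ i : Fin n, ∀ j ∈ Par i, j < i)
    (p q : (i : Fin n) → ({j // j ∈ Par i} → Bool) → ℝ)
    (hp : ∀ i a, p i a ∈ Set.Icc (0:ℝ) 1) (hq : ∀ i a, q i a ∈ Set.Ioo (0:ℝ) 1) :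
    2 * (∑ i : Fin n, ∑ a : ({j // j ∈ Par i} → Bool),
        (∑ x ∈ configSet Par i a, bnDist Par p x) * (p i a - q i a) ^ 2)
      ≤ klDiv (bnDist Par p) (bnDist Par q) ∧
    klDiv (bnDist Par p) (bnDist Par q)
      ≤ ∑ i : Fin n, ∑ a : ({j // j ∈ Par i} → Bool),
          (∑ x ∈ configSet Par i a, bnDist Par p x)
            * ((p i a - q i a) ^ 2 / (q i a * (1 - q i a))) := by
  have hconf : ∀ i a, 0 ≤ ∑ x ∈ configSet Par i a, bnDist Par p x :=
    fun i a => Finset.sum_nonneg fun x _ => bnDist_nonneg p hp x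
  rw [klDiv_bnDist_eq_sum_binKL p hPar q hq, Finset.mul_sum]
  constructor
  · refine Finset.sum_le_sum fun i _ => ?_
    rw [Finset.mul_sum]
    refine Finset.sum_le_sum fun a _ => ?_
    rw [mul_left_comm]
    exact mul_le_mul_of_nonneg_left (two_mul_sq_le_binKL (hp i a) (hq i a)) (hconf i a)
  · exact Finset.sum_le_sum fun i _ => Finset.sum_le_sum fun a _ =>
      mul_le_mul_of_nonneg_left (binKL_le_chiSq (hp i a) (hq i a)) (hconf i a)
end

section
/- Let n ≥ 1, m > 0, p ∈ [0,1]^n and q ∈ (0,1)^n. Let W_1, ..., W_n be independent random variables with W_i distributed as Poisson(m·p_i), and set W = ∑_{i=1}^n ((W_i − m·q_i)² − W_i)/(q_i(1 − q_i)). Then E[W] = m²·∑_{i=1}^n (p_i − q_i)²/(q_i(1 − q_i)). -/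
open MeasureTheory ProbabilityTheory

/-- The Poisson probability mass function with rate `lam`. -/
noncomputable def poissonPMF (lam : ℝ) (k : ℕ) : ℝ :=
  Real.exp (-lam) * lam ^ k / (Nat.factorial k)

/-!
The `k`-th descending factorial moment of `Po(r)` is `r ^ k`: shifting the series by `k` turns
`n.descFactorial k / n!` into `1 / (n - k)!`. Writing `(X - b) ^ 2 - X = X (X - 1) - 2 b X + b ^ 2`,
a Poisson variable `X` of rate `r` therefore has `E[(X - b) ^ 2 - X] = r ^ 2 - 2 b r + b ^ 2 =
(r - b) ^ 2`. With `r = m p i`, `b = m q i` and linearity of the expectation this is the claim.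
-/

open Real
open scoped NNReal Nat

namespace ProbabilityTheory

lemma exp_neg_mul_pow_div_factorial_add_mul_descFactorial (r : ℝ≥0) (n k : ℕ) :
    exp (-r) * r ^ (n + k) / (n + k)! * (n + k).descFactorial k =
      r ^ k * (exp (-r) * r ^ n / n !) := by
  have hfact : ((n + k)! : ℝ) = n ! * (n + k).descFactorial k := by
    rw [← Nat.factorial_mul_descFactorial (Nat.le_add_left k n), Nat.add_sub_cancel]
    push_cast; ring
  rw [hfact, pow_add]
  have : ((n + k).descFactorial k : ℝ) ≠ 0 := by
    exact_mod_cast (Nat.descFactorial_pos.2 (Nat.le_add_left k n)).ne'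
  field_simp

lemma hasSum_descFactorial_poissonMeasure (r : ℝ≥0) (k : ℕ) :
    HasSum (fun n : ℕ ↦ exp (-r) * r ^ n / n ! * n.descFactorial k) (r ^ k) := by
  have hshift :
      HasSum (fun n ↦ exp (-r) * r ^ (n + k) / (n + k)! * (n + k).descFactorial k) (r ^ k) := by
    simpa only [exp_neg_mul_pow_div_factorial_add_mul_descFactorial, mul_one] using
      (hasSum_one_poissonMeasure r).mul_left ((r : ℝ) ^ k)
  have hhead : ∑ n ∈ Finset.range k, exp (-r) * r ^ n / n ! * n.descFactorial k = 0 :=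
    Finset.sum_eq_zero fun n hn ↦ by
      rw [Nat.descFactorial_eq_zero_iff_lt.2 (Finset.mem_range.1 hn), Nat.cast_zero, mul_zero]
  have := (hasSum_nat_add_iff (f := fun n : ℕ ↦ exp (-r) * r ^ n / n ! * n.descFactorial k) k).1
    hshift
  rwa [hhead, add_zero] at this

lemma integrable_descFactorial_poissonMeasure (r : ℝ≥0) (k : ℕ) :
    Integrable (fun n : ℕ ↦ (n.descFactorial k : ℝ)) Po(r) :=
  integrable_poissonMeasure_iff.2 <| by
    simpa using (hasSum_descFactorial_poissonMeasure r k).summable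

lemma integral_descFactorial_poissonMeasure (r : ℝ≥0) (k : ℕ) :
    ∫ n, (n.descFactorial k : ℝ) ∂Po(r) = r ^ k :=
  (hasSum_integral_poissonMeasure (integrable_descFactorial_poissonMeasure r k)).unique <| by
    simpa using hasSum_descFactorial_poissonMeasure r k

lemma sq_sub_sub_eq_descFactorial (b : ℝ) (n : ℕ) :
    ((n : ℝ) - b) ^ 2 - n = n.descFactorial 2 - 2 * b * n.descFactorial 1 + b ^ 2 := by
  rw [Nat.cast_descFactorial_two, Nat.descFactorial_one]; ring

lemma integrable_sq_sub_sub_poissonMeasure (r : ℝ≥0) (b : ℝ) :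
    Integrable (fun n : ℕ ↦ ((n : ℝ) - b) ^ 2 - n) Po(r) := by
  simp only [sq_sub_sub_eq_descFactorial]
  exact ((integrable_descFactorial_poissonMeasure r 2).sub
    ((integrable_descFactorial_poissonMeasure r 1).const_mul _)).add (integrable_const _)

lemma integral_sq_sub_sub_poissonMeasure (r : ℝ≥0) (b : ℝ) :
    ∫ n, (((n : ℝ) - b) ^ 2 - n) ∂Po(r) = (r - b) ^ 2 := by
  simp only [sq_sub_sub_eq_descFactorial]
  have h₁ := integrable_descFactorial_poissonMeasure r 1
  have h₂ := integrable_descFactorial_poissonMeasure r 2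
  have h₂₁ : Integrable (fun n : ℕ ↦ (n.descFactorial 2 : ℝ) - 2 * b * n.descFactorial 1) Po(r) :=
    h₂.sub (h₁.const_mul _)
  rw [integral_add h₂₁ (integrable_const _), integral_sub h₂ (h₁.const_mul _),
    integral_const_mul, integral_descFactorial_poissonMeasure,
    integral_descFactorial_poissonMeasure, integral_const]
  simp only [probReal_univ, smul_eq_mul, one_mul]
  ring

lemma hasLaw_poissonMeasure_of_measure_preimage_singleton {Ω : Type*} [MeasurableSpace Ω]
    {μ : Measure Ω} {X : Ω → ℕ} (hX : Measurable X) {r : ℝ≥0}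
    (hlaw : ∀ k, μ (X ⁻¹' {k}) = ENNReal.ofReal (exp (-r) * r ^ k / k !)) :
    HasLaw X Po(r) μ where
  map_eq := Measure.ext_of_singleton fun k ↦ by
    rw [Measure.map_apply hX (.singleton k), hlaw, poissonMeasure_singleton]

lemma HasLaw.integrable_comp_of_countable {Ω α E : Type*} [MeasurableSpace Ω] [MeasurableSpace α]
    [Countable α] [MeasurableSingletonClass α] [NormedAddCommGroup E] {μ : Measure Ω}
    {ν : Measure α} {X : Ω → α} (hX : HasLaw X ν μ) {f : α → E} (hf : Integrable f ν) : Integrable (fun ω ↦ f (X ω)) μ :=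
  (integrable_map_measure .of_discrete hX.aemeasurable).1 (hX.map_eq ▸ hf)

end ProbabilityTheory

theorem stmt4_general {Ω : Type*} [MeasurableSpace Ω] (μ : Measure Ω)
    (n : ℕ) (m : ℝ) (hm : 0 < m)
    (p q : Fin n → ℝ) (hp : ∀ i, p i ∈ Set.Icc (0:ℝ) 1)
    (W : Fin n → Ω → ℕ) (hmeas : ∀ i, Measurable (W i))
    (hlaw : ∀ i k, μ (W i ⁻¹' {k}) = ENNReal.ofReal (poissonPMF (m * p i) k)) :
    ∫ ω, (∑ i, (((W i ω : ℝ) - m * q i) ^ 2 - (W i ω : ℝ)) / (q i * (1 - q i))) ∂μ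
      = m ^ 2 * ∑ i, (p i - q i) ^ 2 / (q i * (1 - q i)) := by
  let r (i : Fin n) : ℝ≥0 := ⟨m * p i, mul_nonneg hm.le (hp i).1⟩
  have hW (i : Fin n) : HasLaw (W i) Po(r i) μ :=
    hasLaw_poissonMeasure_of_measure_preimage_singleton (hmeas i) (hlaw i)
  have hint (i : Fin n) :
      Integrable (fun ω ↦ ((W i ω : ℝ) - m * q i) ^ 2 - W i ω) μ :=
    (hW i).integrable_comp_of_countable (integrable_sq_sub_sub_poissonMeasure _ _)
  rw [integral_finsetSum _ fun i _ ↦ (hint i).div_const _, Finset.mul_sum]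
  refine Finset.sum_congr rfl fun i _ ↦ ?_
  have hmean : ∫ ω, ((W i ω : ℝ) - m * q i) ^ 2 - W i ω ∂μ = (m * p i - m * q i) ^ 2 :=
    ((hW i).integral_comp .of_discrete).trans (integral_sq_sub_sub_poissonMeasure _ _)
  rw [integral_div, hmean]
  ring

theorem stmt4 {Ω : Type*} [MeasurableSpace Ω] (μ : Measure Ω) [IsProbabilityMeasure μ]
    (n : ℕ) (hn : 1 ≤ n) (m : ℝ) (hm : 0 < m)
    (p q : Fin n → ℝ) (hp : ∀ i, p i ∈ Set.Icc (0:ℝ) 1) (hq : ∀ i, q i ∈ Set.Ioo (0:ℝ) 1)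
    (W : Fin n → Ω → ℕ) (hmeas : ∀ i, Measurable (W i))
    (hindep : iIndepFun W μ)
    (hlaw : ∀ i k, μ (W i ⁻¹' {k}) = ENNReal.ofReal (poissonPMF (m * p i) k)) :
    ∫ ω, (∑ i, (((W i ω : ℝ) - m * q i) ^ 2 - (W i ω : ℝ)) / (q i * (1 - q i))) ∂μ
      = m ^ 2 * ∑ i, (p i - q i) ^ 2 / (q i * (1 - q i)) :=
  stmt4_general μ n m hm p q hp W hmeas hlaw
end

section
/- Let n ≥ 1, m > 0, γ ∈ (0,1/2], p ∈ [0,1]^n and q ∈ [γ, 1/2]^n. Let W_1, ..., W_n be independent random variables with W_i distributed as Poisson(m·p_i), and set W = ∑_{i=1}^n ((W_i − m·q_i)² − W_i)/(q_i(1 − q_i)). Then Var[W] ≤ 16·n·m² + (32/γ + 16·√(2n)·m)·E[W] + (32/√γ)·E[W]^{3/2}, where E[W] = m²·∑_{i=1}^n (p_i − q_i)²/(q_i(1 − q_i)). -/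
/-!
Write `c_i = q_i (1 - q_i)`. The summands of `W` are independent, so `Var[W]` is the sum of
`Var[(W_i - m q_i)² - W_i] / c_i²`. The factorial moments of a Poisson variable `N` of rate `r`
are `E[N (N - 1) ⋯ (N - k + 1)] = r ^ k`; expanding in them gives `E[(N - a)² - N] = (r - a)²`
and `Var[(N - a)² - N] = 2 r² + 4 r (r - a)²`. With `r = m p_i`, `a = m q_i` and
`t_i = m² (p_i - q_i)² / c_i`, the bounds `q_i ≤ 2 c_i` and `γ ≤ 2 c_i` turn each term into at most
`16 m² + (8 / γ + 8 m) t_i + 4 √(2 / γ) t_i^{3/2}`, and `∑ t_i^{3/2} ≤ (∑ t_i)^{3/2}`.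
-/

open MeasureTheory ProbabilityTheory

open scoped NNReal

lemma hasSum_poisson_mul_descPochhammer (r : ℝ≥0) (k : ℕ) :
    HasSum (fun n : ℕ => Real.exp (-r) * r ^ n / n.factorial * (descPochhammer ℝ k).eval (n : ℝ))
      ((r : ℝ) ^ k) := by
  have hvanish : ∀ n ∈ Finset.range k,
      Real.exp (-r) * r ^ n / n.factorial * (descPochhammer ℝ k).eval (n : ℝ) = 0 := fun n hn => by
    rw [descPochhammer_eval_coe_nat_of_lt (Finset.mem_range.1 hn), mul_zero]
  rw [← hasSum_nat_add_iff' k, Finset.sum_eq_zero hvanish, sub_zero]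
  have hshift : ∀ j : ℕ, Real.exp (-r) * r ^ (j + k) / (j + k).factorial
      * (descPochhammer ℝ k).eval ((j + k : ℕ) : ℝ)
      = (r : ℝ) ^ k * (Real.exp (-r) * r ^ j / j.factorial) := fun j => by
    have hfact := Nat.factorial_mul_descFactorial (Nat.le_add_left k j)
    rw [Nat.add_sub_cancel] at hfact
    have hj : (j.factorial : ℝ) ≠ 0 := by positivity
    rw [descPochhammer_eval_eq_descFactorial, pow_add, ← hfact]
    push_cast
    field_simp
  simp_rw [hshift]
  simpa using (hasSum_one_poissonMeasure r).mul_left ((r : ℝ) ^ k)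

lemma hasSum_poisson_mul_sq_sub_sub (r : ℝ≥0) (a : ℝ) :
    HasSum (fun n : ℕ => Real.exp (-r) * r ^ n / n.factorial * (((n : ℝ) - a) ^ 2 - n))
      ((r - a) ^ 2) := by
  have h := ((hasSum_poisson_mul_descPochhammer r 2).add
    ((hasSum_poisson_mul_descPochhammer r 1).mul_left (-2 * a))).add
    ((hasSum_poisson_mul_descPochhammer r 0).mul_left (a ^ 2))
  convert h using 1
  · funext n
    simp only [descPochhammer_eval_eq_prod_range, Finset.prod_range_succ, Finset.prod_range_zero]
    ring
  · ring

lemma hasSum_poisson_mul_sq_sub_sub_sq (r : ℝ≥0) (a : ℝ) :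
    HasSum (fun n : ℕ => Real.exp (-r) * r ^ n / n.factorial * (((n : ℝ) - a) ^ 2 - n) ^ 2)
      ((r - a) ^ 4 + 2 * r ^ 2 + 4 * r * (r - a) ^ 2) := by
  have h := ((((hasSum_poisson_mul_descPochhammer r 4).add
    ((hasSum_poisson_mul_descPochhammer r 3).mul_left (4 - 4 * a))).add
    ((hasSum_poisson_mul_descPochhammer r 2).mul_left (2 - 8 * a + 6 * a ^ 2))).add
    ((hasSum_poisson_mul_descPochhammer r 1).mul_left (4 * a ^ 2 - 4 * a ^ 3))).add
    ((hasSum_poisson_mul_descPochhammer r 0).mul_left (a ^ 4))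
  convert h using 1
  · funext n
    simp only [descPochhammer_eval_eq_prod_range, Finset.prod_range_succ, Finset.prod_range_zero]
    ring
  · ring

lemma memLp_two_poissonMeasure_sq_sub_sub (r : ℝ≥0) (a : ℝ) :
    MemLp (fun n : ℕ => ((n : ℝ) - a) ^ 2 - n) 2 Po(r) := by
  refine (memLp_two_iff_integrable_sq .of_discrete).2 (integrable_poissonMeasure_iff.2 ?_)
  simpa only [Real.norm_eq_abs, abs_sq] using (hasSum_poisson_mul_sq_sub_sub_sq r a).summable

lemma variance_poissonMeasure_sq_sub_sub (r : ℝ≥0) (a : ℝ) :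
    Var[fun n : ℕ => ((n : ℝ) - a) ^ 2 - n; Po(r)] = 2 * r ^ 2 + 4 * r * (r - a) ^ 2 := by
  have hmean : ∫ n, ((n : ℝ) - a) ^ 2 - n ∂Po(r) = (r - a) ^ 2 := by
    rw [integral_poissonMeasure]
    exact (hasSum_poisson_mul_sq_sub_sub r a).tsum_eq
  have hsecond : ∫ n, (((n : ℝ) - a) ^ 2 - n) ^ 2 ∂Po(r)
      = (r - a) ^ 4 + 2 * r ^ 2 + 4 * r * (r - a) ^ 2 := by
    rw [integral_poissonMeasure]
    exact (hasSum_poisson_mul_sq_sub_sub_sq r a).tsum_eq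
  rw [variance_eq_sub (memLp_two_poissonMeasure_sq_sub_sub r a)]
  simp only [Pi.pow_apply, hmean, hsecond]
  ring

section RandomVariables

variable {Ω : Type*} [MeasurableSpace Ω] {μ : Measure Ω}

lemma hasLaw_poissonMeasure {W : Ω → ℕ} (hW : Measurable W) {r : ℝ} (hr : 0 ≤ r)
    (hlaw : ∀ k, μ (W ⁻¹' {k}) = ENNReal.ofReal (poissonPMF r k)) :
    HasLaw W Po(r.toNNReal) μ where
  aemeasurable := hW.aemeasurable
  map_eq := Measure.ext_of_singleton fun k => by
    rw [Measure.map_apply hW (measurableSet_singleton k), hlaw, poissonMeasure_singleton,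
      Real.coe_toNNReal r hr]
    rfl

lemma variance_sum_sq_sub_sub_div_of_poisson [IsProbabilityMeasure μ] {ι : Type*} [Fintype ι]
    {W : ι → Ω → ℕ} {r : ι → ℝ≥0} (hlaw : ∀ i, HasLaw (W i) Po(r i) μ) (hindep : iIndepFun W μ)
    (a c : ι → ℝ) :
    Var[fun ω => ∑ i, (((W i ω : ℝ) - a i) ^ 2 - W i ω) / c i; μ]
      = ∑ i, (2 * r i ^ 2 + 4 * r i * (r i - a i) ^ 2) / c i ^ 2 := by
  set f : ι → ℕ → ℝ := fun i n => (((n : ℝ) - a i) ^ 2 - n) * (c i)⁻¹ with hf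
  have hf_memLp : ∀ i, MemLp (f i) 2 Po(r i) := fun i =>
    (memLp_two_poissonMeasure_sq_sub_sub (r i) (a i)).mul_const (c i)⁻¹
  have hf_var : ∀ i, Var[f i; Po(r i)] = (2 * r i ^ 2 + 4 * r i * (r i - a i) ^ 2) / c i ^ 2 := by
    intro i
    rw [hf, variance_mul_const, variance_poissonMeasure_sq_sub_sub, inv_pow, div_eq_mul_inv]
  have hsum : (fun ω => ∑ i, (((W i ω : ℝ) - a i) ^ 2 - W i ω) / c i) = ∑ i, f i ∘ W i := by
    funext ω; simp [f, div_eq_mul_inv]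
  rw [hsum, IndepFun.variance_sum (fun i _ => ?_) (fun i _ j _ hij => ?_)]
  · refine Finset.sum_congr rfl fun i _ => ?_
    rw [← variance_map .of_discrete (hlaw i).aemeasurable, (hlaw i).map_eq, hf_var]
  · exact (hlaw i).map_eq ▸ hf_memLp i |>.comp_of_map (hlaw i).aemeasurable
  · exact (hindep.indepFun hij).comp .of_discrete .of_discrete

end RandomVariables

lemma sq_sub_sub_variance_div_le {m γ p q : ℝ} (hm : 0 ≤ m) (hγ : 0 < γ) (hγq : γ ≤ q)
    (hq : q ≤ 1 / 2) :
    (2 * (m * p) ^ 2 + 4 * (m * p) * (m * p - m * q) ^ 2) / (q * (1 - q)) ^ 2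
      ≤ 16 * m ^ 2 + (8 / γ + 8 * m) * (m ^ 2 * (p - q) ^ 2 / (q * (1 - q)))
        + 4 * √(2 / γ) * (m ^ 2 * (p - q) ^ 2 / (q * (1 - q))
          * √(m ^ 2 * (p - q) ^ 2 / (q * (1 - q)))) := by
  have hq0 : 0 ≤ q := hγ.le.trans hγq
  have hc : 0 < q * (1 - q) := by nlinarith
  have hqc : q * (q * (1 - q))⁻¹ ≤ 2 := by rw [← div_eq_mul_inv, div_le_iff₀ hc]; nlinarith
  have hγc : (q * (1 - q))⁻¹ ≤ 2 / γ := by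
    rw [inv_le_comm₀ hc (by positivity), inv_div]; nlinarith
  have hsqrt : √(m ^ 2 * (p - q) ^ 2 / (q * (1 - q))) = |m * (p - q)| * √((q * (1 - q))⁻¹) := by
    rw [div_eq_mul_inv, ← mul_pow, Real.sqrt_mul (sq_nonneg _), Real.sqrt_sq_eq_abs]
  rw [hsqrt, show m ^ 2 * (p - q) ^ 2 = (m * (p - q)) ^ 2 by ring,
    show 2 * (m * p) ^ 2 + 4 * (m * p) * (m * p - m * q) ^ 2
      = 2 * (m * q + m * (p - q)) ^ 2 + 4 * (m * q) * (m * (p - q)) ^ 2 + 4 * (m * (p - q)) ^ 3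
      by ring]
  generalize q * (1 - q) = c at hc hqc hγc ⊢
  generalize m * (p - q) = Δ
  have h1 : 2 * (m * q + Δ) ^ 2 / c ^ 2 ≤ 16 * m ^ 2 + 8 / γ * (Δ ^ 2 / c) :=
    calc 2 * (m * q + Δ) ^ 2 / c ^ 2 ≤ (4 * (m * q) ^ 2 + 4 * Δ ^ 2) / c ^ 2 := by
          gcongr; nlinarith [sq_nonneg (m * q - Δ)]
      _ = 4 * m ^ 2 * (q * c⁻¹) ^ 2 + 4 * (Δ ^ 2 / c) * c⁻¹ := by field_simp
      _ ≤ 4 * m ^ 2 * 2 ^ 2 + 4 * (Δ ^ 2 / c) * (2 / γ) := by gcongr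
      _ = 16 * m ^ 2 + 8 / γ * (Δ ^ 2 / c) := by ring
  have h2 : 4 * (m * q) * Δ ^ 2 / c ^ 2 ≤ 8 * m * (Δ ^ 2 / c) :=
    calc 4 * (m * q) * Δ ^ 2 / c ^ 2 = 4 * m * (q * c⁻¹) * (Δ ^ 2 / c) := by field_simp
      _ ≤ 4 * m * 2 * (Δ ^ 2 / c) := by gcongr
      _ = 8 * m * (Δ ^ 2 / c) := by ring
  have h3 : 4 * Δ ^ 3 / c ^ 2 ≤ 4 * √(2 / γ) * (Δ ^ 2 / c * (|Δ| * √(c⁻¹))) := by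
    have hcube : Δ ^ 3 ≤ |Δ| ^ 3 := abs_pow Δ 3 ▸ le_abs_self _
    have hs : √(c⁻¹) ^ 2 = c⁻¹ := Real.sq_sqrt (inv_nonneg.2 hc.le)
    calc 4 * Δ ^ 3 / c ^ 2 ≤ 4 * |Δ| ^ 3 / c ^ 2 := by gcongr ?_ / _; linarith
      _ = 4 * √(c⁻¹) * (Δ ^ 2 / c * (|Δ| * √(c⁻¹))) := by
          rw [← sq_abs Δ]; linear_combination (-4 * |Δ| ^ 3 / c) * hs
      _ ≤ 4 * √(2 / γ) * (Δ ^ 2 / c * (|Δ| * √(c⁻¹))) := by gcongr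
  rw [add_div, add_div]
  linarith

lemma Finset.sum_mul_sqrt_le {ι : Type*} (s : Finset ι) {t : ι → ℝ} (ht : ∀ i ∈ s, 0 ≤ t i) :
    ∑ i ∈ s, t i * √(t i) ≤ (∑ i ∈ s, t i) * √(∑ i ∈ s, t i) := by
  rw [Finset.sum_mul]
  gcongr with i hi
  · exact ht i hi
  · exact Finset.single_le_sum ht hi

lemma Finset.sum_const_add_mul_add_mul_mul_sqrt_le {ι : Type*} (s : Finset ι) {t : ι → ℝ}
    (ht : ∀ i ∈ s, 0 ≤ t i) (A B : ℝ) {C : ℝ} (hC : 0 ≤ C) :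
    ∑ i ∈ s, (A + B * t i + C * (t i * √(t i)))
      ≤ s.card * A + B * ∑ i ∈ s, t i + C * ((∑ i ∈ s, t i) * √(∑ i ∈ s, t i)) := by
  simp only [Finset.sum_add_distrib, ← Finset.mul_sum, Finset.sum_const, nsmul_eq_mul]
  gcongr
  exact Finset.sum_mul_sqrt_le s ht

lemma Real.rpow_three_halves_eq_mul_sqrt {x : ℝ} (hx : 0 ≤ x) : x ^ ((3 : ℝ) / 2) = x * √x := by
  rw [show (3 : ℝ) / 2 = 1 + 1 / 2 by norm_num, Real.rpow_add' hx (by norm_num), Real.rpow_one,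
    ← Real.sqrt_eq_rpow]

theorem stmt5 {Ω : Type*} [MeasurableSpace Ω] (μ : Measure Ω) [IsProbabilityMeasure μ]
    (n : ℕ) (hn : 1 ≤ n) (m γ : ℝ) (hm : 0 < m) (hγ : γ ∈ Set.Ioc (0:ℝ) (1/2))
    (p q : Fin n → ℝ) (hp : ∀ i, p i ∈ Set.Icc (0:ℝ) 1)
    (hq : ∀ i, q i ∈ Set.Icc γ (1/2))
    (W : Fin n → Ω → ℕ) (hmeas : ∀ i, Measurable (W i))
    (hindep : iIndepFun W μ)
    (hlaw : ∀ i k, μ (W i ⁻¹' {k}) = ENNReal.ofReal (poissonPMF (m * p i) k)) :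
    variance (fun ω => ∑ i, (((W i ω : ℝ) - m * q i) ^ 2 - (W i ω : ℝ)) / (q i * (1 - q i))) μ
      ≤ 16 * n * m ^ 2
        + (32 / γ + 16 * Real.sqrt (2 * n) * m)
            * (m ^ 2 * ∑ i, (p i - q i) ^ 2 / (q i * (1 - q i)))
        + (32 / Real.sqrt γ)
            * (m ^ 2 * ∑ i, (p i - q i) ^ 2 / (q i * (1 - q i))) ^ ((3:ℝ)/2) := by
  obtain ⟨hγ0, -⟩ := hγ
  have hrate : ∀ i, 0 ≤ m * p i := fun i => mul_nonneg hm.le (hp i).1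
  set t : Fin n → ℝ := fun i => m ^ 2 * (p i - q i) ^ 2 / (q i * (1 - q i))
  have ht0 : ∀ i ∈ Finset.univ, 0 ≤ t i := fun i _ => by
    obtain ⟨hγq, hq2⟩ := hq i
    exact div_nonneg (by positivity) (by nlinarith)
  have hE : m ^ 2 * ∑ i, (p i - q i) ^ 2 / (q i * (1 - q i)) = ∑ i, t i := by
    rw [Finset.mul_sum]; simp only [t, mul_div_assoc]
  have hS0 : 0 ≤ ∑ i, t i := Finset.sum_nonneg ht0
  rw [variance_sum_sq_sub_sub_div_of_poisson
    (fun i => hasLaw_poissonMeasure (hmeas i) (hrate i) (hlaw i)) hindep, hE,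
    Real.rpow_three_halves_eq_mul_sqrt hS0]
  simp only [Real.coe_toNNReal _ (hrate _)]
  calc _ ≤ ∑ i, (16 * m ^ 2 + (8 / γ + 8 * m) * t i + 4 * √(2 / γ) * (t i * √(t i))) :=
        Finset.sum_le_sum fun i _ => sq_sub_sub_variance_div_le hm.le hγ0 (hq i).1 (hq i).2
    _ ≤ n * (16 * m ^ 2) + (8 / γ + 8 * m) * ∑ i, t i
          + 4 * √(2 / γ) * ((∑ i, t i) * √(∑ i, t i)) := by
        simpa using Finset.sum_const_add_mul_add_mul_mul_sqrt_le _ ht0 _ _ (by positivity)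
    _ ≤ _ := by
        have hsqrt_n : 1 ≤ √(2 * n) := Real.one_le_sqrt.2 (by norm_cast; omega)
        have hsqrt_γ : 4 * √(2 / γ) ≤ 32 / √γ := by
          rw [Real.sqrt_div' _ hγ0.le, ← mul_div_assoc]
          gcongr
          nlinarith [Real.sq_sqrt (zero_le_two : (0 : ℝ) ≤ 2), Real.sqrt_nonneg 2]
        rw [← mul_assoc, mul_comm (n : ℝ)]
        gcongr
        · norm_num
        · nlinarith
end

section
/- There exist absolute constants c > 0, ε₀ ∈ (0,1), and n₀ ∈ ℕ such that for every n ≥ n₀ and every ε ∈ (0, ε₀], the product distribution P over {0,1}^n with mean vector (1/2 + ε/√n, ..., 1/2 + ε/√n) satisfies ‖P − U‖₁ ≥ c·ε, where U is the uniform distribution over {0,1}^n. -/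
/-!
Write `σᵢ(x) = ±1` for the spins of `x ∈ {0,1}ⁿ`, `S = ∑ σᵢ` and `y = 2ε/√n`. Then
`P(x) = 2⁻ⁿ ℓ(x)` with likelihood ratio `ℓ = ∏ (1 + y σᵢ)`. Since `1 + t ≤ eᵗ` and
`(1 + yσ)(1 - yσ) = 1 - y²`, we get `(1 - y²)ⁿ e^{yS} ≤ ℓ ≤ e^{yS}`, and `n y² = 4ε²` turns
this into `|ℓ - 1| ≥ ε/2` as soon as `S² > n/4`. Under the uniform distribution `𝔼 S² = n` and
`𝔼 S⁴ ≤ 3n²`, so by Paley–Zygmund at least `3/16` of the cube has `S² > n/4`, whence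
`‖P - U‖₁ ≥ 3ε/32`.
-/

open Finset Real

/-- The Paley–Zygmund inequality, in counting form. -/
theorem sq_sum_sub_le_card_filter_lt_mul_sum_sq {ι : Type*} (s : Finset ι) (Z : ι → ℝ) {t : ℝ}
    (ht : 0 ≤ t) (h : t * #s ≤ ∑ i ∈ s, Z i) :
    (∑ i ∈ s, Z i - t * #s) ^ 2 ≤ #{i ∈ s | t < Z i} * ∑ i ∈ s, Z i ^ 2 := by
  have hsmall : ∑ i ∈ s with ¬ t < Z i, Z i ≤ t * #s :=
    calc ∑ i ∈ s with ¬ t < Z i, Z i ≤ ∑ i ∈ s with ¬ t < Z i, t :=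
          sum_le_sum fun i hi => not_lt.1 (mem_filter.1 hi).2
      _ ≤ t * #s := by
          rw [sum_const, nsmul_eq_mul, mul_comm]
          exact mul_le_mul_of_nonneg_left (Nat.cast_le.2 (card_filter_le _ _)) ht
  have hlarge : ∑ i ∈ s, Z i - t * #s ≤ ∑ i ∈ s with t < Z i, Z i := by
    linarith [sum_filter_add_sum_filter_not s (fun i => t < Z i) Z]
  calc (∑ i ∈ s, Z i - t * #s) ^ 2 ≤ (∑ i ∈ s with t < Z i, Z i) ^ 2 :=
        pow_le_pow_left₀ (sub_nonneg.2 h) hlarge 2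
    _ ≤ #{i ∈ s | t < Z i} * ∑ i ∈ s with t < Z i, Z i ^ 2 := sq_sum_le_card_mul_sum_sq
    _ ≤ #{i ∈ s | t < Z i} * ∑ i ∈ s, Z i ^ 2 := by
        refine mul_le_mul_of_nonneg_left ?_ (Nat.cast_nonneg _)
        exact sum_le_sum_of_subset_of_nonneg (filter_subset _ s) fun i _ _ => sq_nonneg (Z i)

def spin (b : Bool) : ℝ := if b then 1 else -1

theorem spin_sq (b : Bool) : spin b ^ 2 = 1 := by cases b <;> norm_num [spin]

def spinSum {n : ℕ} (x : Fin n → Bool) : ℝ := ∑ i, spin (x i)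

theorem spinSum_cons {n : ℕ} (b : Bool) (x : Fin n → Bool) :
    spinSum (Fin.cons b x : Fin (n + 1) → Bool) = spinSum x + spin b := by
  simp only [spinSum, Fin.sum_univ_succ, Fin.cons_zero, Fin.cons_succ, add_comm]

theorem sum_comp_spinSum_succ {n : ℕ} (f : ℝ → ℝ) :
    ∑ x : Fin (n + 1) → Bool, f (spinSum x)
      = ∑ x : Fin n → Bool, (f (spinSum x + 1) + f (spinSum x - 1)) := by
  rw [← (Fin.consEquiv fun _ => Bool).sum_comp, Fintype.sum_prod_type, Fintype.sum_bool,
    ← sum_add_distrib]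
  simp only [Fin.consEquiv, Equiv.coe_fn_mk, spinSum_cons, spin, if_true, Bool.false_eq_true,
    if_false, ← sub_eq_add_neg]

theorem card_fin_fun_bool (n : ℕ) : (Fintype.card (Fin n → Bool) : ℝ) = 2 ^ n := by simp

theorem sum_spinSum_sq (n : ℕ) : ∑ x : Fin n → Bool, spinSum x ^ 2 = n * 2 ^ n := by
  induction n with
  | zero => simp [spinSum]
  | succ n ih =>
    rw [sum_comp_spinSum_succ (· ^ 2)]
    calc ∑ x : Fin n → Bool, ((spinSum x + 1) ^ 2 + (spinSum x - 1) ^ 2 : ℝ)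
        = ∑ x : Fin n → Bool, (2 * spinSum x ^ 2 + 2) := sum_congr rfl fun _ _ => by ring
      _ = ((n + 1 : ℕ) : ℝ) * 2 ^ (n + 1) := by
        rw [sum_add_distrib, ← mul_sum, ih, sum_const, card_univ, nsmul_eq_mul, card_fin_fun_bool]
        push_cast
        ring

theorem sum_spinSum_pow_four (n : ℕ) :
    ∑ x : Fin n → Bool, spinSum x ^ 4 = (3 * n ^ 2 - 2 * n) * 2 ^ n := by
  induction n with
  | zero => simp [spinSum]
  | succ n ih =>
    rw [sum_comp_spinSum_succ (· ^ 4)]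
    calc ∑ x : Fin n → Bool, ((spinSum x + 1) ^ 4 + (spinSum x - 1) ^ 4 : ℝ)
        = ∑ x : Fin n → Bool, (2 * spinSum x ^ 4 + 12 * spinSum x ^ 2 + 2) :=
          sum_congr rfl fun _ _ => by ring
      _ = (3 * ((n + 1 : ℕ) : ℝ) ^ 2 - 2 * ((n + 1 : ℕ) : ℝ)) * 2 ^ (n + 1) := by
        rw [sum_add_distrib, sum_add_distrib, ← mul_sum, ← mul_sum, ih, sum_spinSum_sq,
          sum_const, card_univ, nsmul_eq_mul, card_fin_fun_bool]
        push_cast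
        ring

theorem le_card_quarter_lt_spinSum_sq {n : ℕ} (hn : 0 < n) :
    3 / 16 * 2 ^ n ≤ (#{x : Fin n → Bool | n / 4 < spinSum x ^ 2} : ℝ) := by
  have hcard : (#(univ : Finset (Fin n → Bool)) : ℝ) = 2 ^ n := by
    rw [card_univ, card_fin_fun_bool]
  have hpow : (0 : ℝ) < 2 ^ n := by positivity
  have hpz := sq_sum_sub_le_card_filter_lt_mul_sum_sq univ (fun x : Fin n → Bool => spinSum x ^ 2)
    (t := n / 4) (by positivity) (by rw [hcard, sum_spinSum_sq]; nlinarith)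
  simp only [hcard, sum_spinSum_sq, ← pow_mul, sum_spinSum_pow_four] at hpz
  refine le_of_mul_le_mul_right ?_ (by positivity : (0 : ℝ) < 3 * n * (n * 2 ^ n))
  calc (3 / 16 * 2 ^ n * (3 * n * (n * 2 ^ n)) : ℝ) = (n * 2 ^ n - n / 4 * 2 ^ n) ^ 2 := by ring
    _ ≤ _ * ((3 * n ^ 2 - 2 * n) * 2 ^ n) := hpz
    _ ≤ _ * (3 * n * (n * 2 ^ n)) := by
      refine mul_le_mul_of_nonneg_left ?_ (Nat.cast_nonneg _)
      nlinarith [mul_nonneg (Nat.cast_nonneg n : (0 : ℝ) ≤ n) hpow.le]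

theorem prodDist_const_half_add (n : ℕ) (δ : ℝ) (x : Fin n → Bool) :
    prodDist (fun _ : Fin n => 1 / 2 + δ) x
      = (2 : ℝ)⁻¹ ^ n * ∏ i, (1 + 2 * δ * spin (x i)) := by
  rw [prodDist, ← Fin.prod_const, ← prod_mul_distrib]
  refine prod_congr rfl fun i _ => ?_
  cases x i <;> simp only [spin] <;> norm_num <;> ring

theorem one_add_mul_spin_nonneg {y : ℝ} (hy : |y| ≤ 1) (b : Bool) : 0 ≤ 1 + y * spin b := by
  cases b <;> simp only [spin] <;> norm_num <;> linarith [abs_le.1 hy]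

theorem prod_one_add_mul_spin_le_exp {n : ℕ} {y : ℝ} (hy : |y| ≤ 1) (x : Fin n → Bool) :
    ∏ i, (1 + y * spin (x i)) ≤ exp (y * spinSum x) := by
  rw [spinSum, mul_sum, exp_sum]
  exact prod_le_prod (fun i _ => one_add_mul_spin_nonneg hy _)
    fun i _ => by linarith [add_one_le_exp (y * spin (x i))]

theorem one_sub_sq_pow_mul_exp_le_prod {n : ℕ} {y : ℝ} (hy : |y| ≤ 1) (x : Fin n → Bool) :
    (1 - y ^ 2) ^ n * exp (y * spinSum x) ≤ ∏ i, (1 + y * spin (x i)) := by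
  have hpair : (∏ i, (1 + y * spin (x i))) * ∏ i, (1 + -y * spin (x i)) = (1 - y ^ 2) ^ n := by
    rw [← prod_mul_distrib, ← Fin.prod_const]
    refine prod_congr rfl fun i _ => ?_
    linear_combination (-y ^ 2) * spin_sq (x i)
  have hflip := prod_one_add_mul_spin_le_exp (y := -y) (by rwa [abs_neg]) x
  have hprod : 0 ≤ ∏ i, (1 + y * spin (x i)) :=
    prod_nonneg fun i _ => one_add_mul_spin_nonneg hy _
  calc (1 - y ^ 2) ^ n * exp (y * spinSum x)
      ≤ (∏ i, (1 + y * spin (x i))) * exp (-y * spinSum x) * exp (y * spinSum x) := by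
        rw [← hpair]; gcongr
    _ = ∏ i, (1 + y * spin (x i)) := by rw [mul_assoc, ← exp_add]; simp

theorem half_le_abs_prod_one_add_mul_spin_sub_one {n : ℕ} {ε y : ℝ} (hε₀ : 0 ≤ ε)
    (hε : ε ≤ 1 / 10) (hy : |y| ≤ 1) (hny : n * y ^ 2 ≤ 4 * ε ^ 2) (x : Fin n → Bool)
    (hx : ε < |y * spinSum x|) :
    ε / 2 ≤ |∏ i, (1 + y * spin (x i)) - 1| := by
  rcases lt_abs.1 hx with hpos | hneg
  · have hbern : 1 - 4 * ε ^ 2 ≤ (1 - y ^ 2) ^ n := by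
      have := one_add_mul_le_pow (a := -y ^ 2) (by linarith [(sq_le_one_iff_abs_le_one y).2 hy]) n
      rw [← sub_eq_add_neg] at this
      linarith
    have hexp : 1 + ε ≤ exp (y * spinSum x) := by linarith [add_one_le_exp (y * spinSum x)]
    have hprod := one_sub_sq_pow_mul_exp_le_prod hy x
    have hlow : (1 - 4 * ε ^ 2) * (1 + ε) ≤ (1 - y ^ 2) ^ n * exp (y * spinSum x) :=
      mul_le_mul hbern hexp (by linarith) (by nlinarith)
    exact le_abs.2 (Or.inl (by nlinarith))
  · have hexp : exp (-ε) ≤ 1 - ε + ε ^ 2 := by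
      have := abs_exp_sub_one_sub_id_le (x := -ε) (by rw [abs_neg, abs_of_nonneg hε₀]; linarith)
      linarith [(abs_le.1 this).2, neg_sq ε]
    have hprod := prod_one_add_mul_spin_le_exp hy x
    have hmono := exp_le_exp.2 (show y * spinSum x ≤ -ε by linarith)
    exact le_abs.2 (Or.inr (by nlinarith))

theorem l1Dist_prodDist_const_half_add (n : ℕ) (δ : ℝ) :
    l1Dist (prodDist (fun _ : Fin n => 1 / 2 + δ)) (fun _ : Fin n → Bool => (2 : ℝ)⁻¹ ^ n)
      = ∑ x : Fin n → Bool, (2 : ℝ)⁻¹ ^ n * |∏ i, (1 + 2 * δ * spin (x i)) - 1| := by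
  refine sum_congr rfl fun x _ => ?_
  rw [prodDist_const_half_add, ← mul_sub_one, abs_mul, abs_of_pos (by positivity)]

theorem stmt6 : ∃ c : ℝ, 0 < c ∧ ∃ ε₀ ∈ Set.Ioo (0:ℝ) 1, ∃ n₀ : ℕ,
    ∀ n : ℕ, n₀ ≤ n → ∀ ε : ℝ, ε ∈ Set.Ioc (0:ℝ) ε₀ →
      c * ε ≤ l1Dist (prodDist (fun _ : Fin n => 1/2 + ε / Real.sqrt n))
                (fun _ : Fin n → Bool => (2:ℝ)⁻¹ ^ n) := by
  refine ⟨3 / 32, by norm_num, 1 / 10, ⟨by norm_num, by norm_num⟩, 1,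
    fun n hn ε ⟨hε₀, hε⟩ => ?_⟩
  have hsqrt : 1 ≤ √n := one_le_sqrt.2 (by exact_mod_cast hn)
  set y := 2 * (ε / √n) with hy_def
  have hy₀ : 0 < y := by positivity
  have hny : n * y ^ 2 = 4 * ε ^ 2 := by
    rw [hy_def, mul_pow, div_pow, sq_sqrt (Nat.cast_nonneg n)]; field_simp; norm_num
  have hy : |y| ≤ 1 := by
    rw [abs_of_pos hy₀]; linarith [div_le_self hε₀.le hsqrt]
  set A : Finset (Fin n → Bool) := {x | n / 4 < spinSum x ^ 2}
  have hA : ∀ x ∈ A, ε / 2 ≤ |∏ i, (1 + y * spin (x i)) - 1| := by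
    refine fun x hx => half_le_abs_prod_one_add_mul_spin_sub_one hε₀.le hε hy hny.le x ?_
    rw [← abs_of_pos hε₀, ← sq_lt_sq, mul_pow]
    calc ε ^ 2 = y ^ 2 * (n / 4) := by linarith
      _ < y ^ 2 * spinSum x ^ 2 := mul_lt_mul_of_pos_left (mem_filter.1 hx).2 (pow_pos hy₀ 2)
  calc 3 / 32 * ε = (2 : ℝ)⁻¹ ^ n * (3 / 16 * 2 ^ n * (ε / 2)) := by
        rw [inv_pow]; field_simp; ring
    _ ≤ (2 : ℝ)⁻¹ ^ n * (#A * (ε / 2)) := by gcongr; exact le_card_quarter_lt_spinSum_sq hn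
    _ = ∑ x ∈ A, (2 : ℝ)⁻¹ ^ n * (ε / 2) := by rw [sum_const, nsmul_eq_mul]; ring
    _ ≤ ∑ x ∈ A, (2 : ℝ)⁻¹ ^ n * |∏ i, (1 + y * spin (x i)) - 1| :=
        sum_le_sum fun x hx => by gcongr; exact hA x hx
    _ ≤ ∑ x : Fin n → Bool, (2 : ℝ)⁻¹ ^ n * |∏ i, (1 + y * spin (x i)) - 1| :=
        sum_le_sum_of_subset_of_nonneg (subset_univ A) fun _ _ _ => by positivity
    _ = _ := (l1Dist_prodDist_const_half_add n _).symm
end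

section
/- Let (X, A) be a pair of random variables where X takes values in {0,1} with P[X=0] = P[X=1] = 1/2 and A takes values in ℕ, and suppose that P[A=a | X=0] > 0 for every a ∈ ℕ with P[A=a] > 0. Then I(X;A) ≤ ∑_{a ∈ ℕ} P[A=a] · (1 − P[A=a | X=1]/P[A=a | X=0])², where the sum ranges over all a with P[A=a] > 0. -/
/-!
Writing `t_a = P[X=0 | A=a]` and `h` for the binary entropy in nats, the uniform prior turns
`I(X;A)` into `∑ₐ P[A=a] · (log 2 - h(t_a)) / log 2`, while the ratio of likelihoods is
`(1 - t_a) / t_a`, so the summand on the right is `P[A=a] · ((2 t_a - 1) / t_a)²`. It therefore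
suffices to show `log 2 - h t ≤ log 2 · ((2t - 1) / t)²` for `0 < t ≤ 1`. When `t² ≤ log 2` this
follows from the `χ²` bound `log 2 - h t ≤ (2t - 1)²`. For larger `t` we have `1 - t < 1/e`,
hence `h t ≥ t (1 - t) + (1 - t) = 1 - t²`, and what remains is the polynomial inequality
`(1 - t) (t³ + t² - 3 t log 2 + log 2) ≥ 0`.
-/

/-- Mutual information (in bits) of a joint distribution `mu` of a pair `(X, A)` with values
in `{0,1} × ℕ`; terms where the joint probability is `0` contribute `0`
(automatic since `0 * log 0 = 0`). -/
noncomputable def mutualInfoBoolNat (mu : Bool × ℕ → ℝ) : ℝ :=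
  ∑' z : Bool × ℕ,
    mu z * Real.logb 2 (mu z / ((∑' a : ℕ, mu (z.1, a)) * (mu (false, z.2) + mu (true, z.2))))

open Real

lemma mul_log_two_mul (x : ℝ) : x * log (2 * x) = x * log 2 + x * log x := by
  rcases eq_or_ne x 0 with rfl | hx
  · simp
  · rw [log_mul two_ne_zero hx]
    ring

lemma mul_log_two_mul_le {x : ℝ} (hx : 0 ≤ x) : x * log (2 * x) ≤ x * (2 * x - 1) := by
  rcases hx.eq_or_lt with rfl | hx
  · simp
  · exact mul_le_mul_of_nonneg_left (log_le_sub_one_of_pos (by positivity)) hx.le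

lemma log_two_sub_binEntropy_eq (t : ℝ) :
    log 2 - binEntropy t = t * log (2 * t) + (1 - t) * log (2 * (1 - t)) := by
  rw [binEntropy, mul_log_two_mul, mul_log_two_mul, log_inv, log_inv]
  ring

lemma log_two_sub_binEntropy_le_sq {t : ℝ} (h0 : 0 ≤ t) (h1 : t ≤ 1) :
    log 2 - binEntropy t ≤ (2 * t - 1) ^ 2 := by
  rw [log_two_sub_binEntropy_eq]
  nlinarith [mul_log_two_mul_le h0, mul_log_two_mul_le (sub_nonneg.mpr h1)]

lemma one_sub_sq_le_binEntropy {t : ℝ} (h0 : 0 < t) (h1 : t ≤ 1) (he : exp 1 * (1 - t) ≤ 1) :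
    1 - t ^ 2 ≤ binEntropy t := by
  have hlog_inv : 1 - t ≤ log t⁻¹ := by
    simpa using one_sub_inv_le_log_of_pos (inv_pos.mpr h0)
  have hlog_inv_one_sub : 1 - t ≤ (1 - t) * log (1 - t)⁻¹ := by
    rcases (sub_nonneg.mpr h1).eq_or_lt with h | h
    · rw [← h]
      simp
    · have : 1 ≤ log (1 - t)⁻¹ := by
        rwa [le_log_iff_exp_le (by positivity), inv_eq_one_div, le_div_iff₀ h]
      nlinarith
  rw [binEntropy]
  nlinarith [mul_le_mul_of_nonneg_left hlog_inv h0.le]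

lemma log_two_sub_binEntropy_le {t : ℝ} (h0 : 0 < t) (h1 : t ≤ 1) :
    log 2 - binEntropy t ≤ log 2 * ((2 * t - 1) / t) ^ 2 := by
  have hlog2_gt := log_two_gt_d9
  have hlog2_lt := log_two_lt_d9
  rw [div_pow, mul_div_assoc', le_div_iff₀ (by positivity)]
  rcases le_or_gt (t ^ 2) (log 2) with ht | ht
  · calc (log 2 - binEntropy t) * t ^ 2 ≤ (2 * t - 1) ^ 2 * t ^ 2 := by
          gcongr
          exact log_two_sub_binEntropy_le_sq h0.le h1
      _ ≤ (2 * t - 1) ^ 2 * log 2 := by gcongr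
      _ = log 2 * (2 * t - 1) ^ 2 := by ring
  · have ht_large : 0.83 < t := by nlinarith
    have hentropy := one_sub_sq_le_binEntropy h0 h1 (by nlinarith [exp_one_lt_d9])
    have hcubic : 0 ≤ (1 - t) * (t ^ 3 + t ^ 2 - 3 * log 2 * t + log 2) :=
      mul_nonneg (by linarith) (by nlinarith)
    nlinarith [mul_le_mul_of_nonneg_right hentropy (sq_nonneg t)]

lemma mul_logb_add_mul_logb_eq {p q : ℝ} (hs : 0 < p + q) :
    p * logb 2 (p / (1 / 2 * (p + q))) + q * logb 2 (q / (1 / 2 * (p + q)))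
      = (p + q) * (log 2 - binEntropy (p / (p + q))) / log 2 := by
  have hp : p / (1 / 2 * (p + q)) = 2 * (p / (p + q)) := by field_simp
  have hq : q / (1 / 2 * (p + q)) = 2 * (1 - p / (p + q)) := by
    field_simp
    ring
  rw [hp, hq, log_two_sub_binEntropy_eq]
  simp only [logb]
  field_simp
  ring

lemma mul_logb_add_mul_logb_bounds {p q : ℝ} (hp : 0 ≤ p) (hq : 0 ≤ q)
    (hpos : 0 < p + q → 0 < p) :
    0 ≤ p * logb 2 (p / (1 / 2 * (p + q))) + q * logb 2 (q / (1 / 2 * (p + q))) ∧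
      p * logb 2 (p / (1 / 2 * (p + q))) + q * logb 2 (q / (1 / 2 * (p + q)))
        ≤ (p + q) * (1 - (q / (1 / 2)) / (p / (1 / 2))) ^ 2 := by
  rcases (add_nonneg hp hq).eq_or_lt with hs | hs
  · obtain ⟨rfl, rfl⟩ : p = 0 ∧ q = 0 := ⟨by linarith, by linarith⟩
    simp
  have hlog2 : 0 < log 2 := log_pos one_lt_two
  have hratio : 1 - (q / (1 / 2)) / (p / (1 / 2)) = (2 * (p / (p + q)) - 1) / (p / (p + q)) := by
    have := hpos hs
    field_simp
    ring
  rw [mul_logb_add_mul_logb_eq hs, hratio]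
  constructor
  · exact div_nonneg (mul_nonneg hs.le (sub_nonneg.mpr binEntropy_le_log_two)) hlog2.le
  · rw [div_le_iff₀ hlog2, mul_assoc, mul_comm _ (log 2)]
    gcongr
    exact log_two_sub_binEntropy_le (div_pos (hpos hs) hs) (div_le_one_of_le₀ (by linarith) hs.le)

lemma ENNReal.ofReal_tsum_le_of_fiberwise {β : Type*} {g : Bool × β → ℝ} {B : β → ℝ}
    (h0 : ∀ b, 0 ≤ g (false, b) + g (true, b)) (hB : ∀ b, g (false, b) + g (true, b) ≤ B b) :
    ENNReal.ofReal (∑' z, g z) ≤ ∑' b, ENNReal.ofReal (B b) := by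
  by_cases hg : Summable g
  · have hfiber x : Summable fun b => g (x, b) := hg.prod_factor x
    rw [hg.tsum_prod, tsum_bool, ← (hfiber false).tsum_add (hfiber true),
      ENNReal.ofReal_tsum_of_nonneg h0 ((hfiber false).add (hfiber true))]
    exact ENNReal.tsum_le_tsum fun b => ENNReal.ofReal_le_ofReal (hB b)
  · simp [tsum_eq_zero_of_not_summable hg]

theorem stmt8_general (mu : Bool × ℕ → ℝ) (hpos : ∀ z, 0 ≤ mu z)
    (hunif : ∀ b : Bool, ∑' a : ℕ, mu (b, a) = 1/2)
    (hcond : ∀ a : ℕ, 0 < mu (false, a) + mu (true, a) → 0 < mu (false, a)) :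
    ENNReal.ofReal (mutualInfoBoolNat mu)
      ≤ ∑' a : ℕ, ENNReal.ofReal
          ((mu (false, a) + mu (true, a)) *
            (1 - (mu (true, a) / (∑' a' : ℕ, mu (true, a')))
                  / (mu (false, a) / (∑' a' : ℕ, mu (false, a')))) ^ 2) := by
  simp only [mutualInfoBoolNat, hunif]
  have hbounds a := mul_logb_add_mul_logb_bounds (hpos (false, a)) (hpos (true, a)) (hcond a)
  exact ENNReal.ofReal_tsum_le_of_fiberwise (fun a => (hbounds a).1) (fun a => (hbounds a).2)

theorem stmt8 (mu : Bool × ℕ → ℝ) (hpos : ∀ z, 0 ≤ mu z) (hsum : HasSum mu 1)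
    (hunif : ∀ b : Bool, ∑' a : ℕ, mu (b, a) = 1/2)
    (hcond : ∀ a : ℕ, 0 < mu (false, a) + mu (true, a) → 0 < mu (false, a)) :
    ENNReal.ofReal (mutualInfoBoolNat mu)
      ≤ ∑' a : ℕ, ENNReal.ofReal
          ((mu (false, a) + mu (true, a)) *
            (1 - (mu (true, a) / (∑' a' : ℕ, mu (true, a')))
                  / (mu (false, a) / (∑' a' : ℕ, mu (false, a')))) ^ 2) :=
  stmt8_general mu hpos hunif hcond
end

section
/- There is an absolute constant C > 0 such that the following holds for all n ≥ 1, all real k > 0, and all ε ∈ (0,1] with ε/√n ≤ 1/2. Let (X, A) be a pair of random variables on {0,1} × ℕ where X is uniform on {0,1}, the conditional distribution of A given X=0 is Poisson(k/2), and the conditional distribution of A given X=1 is the even mixture (1/2)·Poisson(k(1/2 + ε/√n)) + (1/2)·Poisson(k(1/2 − ε/√n)). Then I(X;A) ≤ C·k²·ε⁴/n². -/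
/-- The joint distribution of `(X, A)` where `X` is uniform on `{0,1}`, `A | X=0` is
`Poisson(k/2)`, and `A | X=1` is the even mixture of `Poisson(k(1/2 + ε/√n))` and
`Poisson(k(1/2 − ε/√n))`. -/
noncomputable def muNine (n : ℕ) (k ε : ℝ) : Bool × ℕ → ℝ := fun z =>
  if z.1 then
    (1/2) * ((1/2) * poissonPMF (k * (1/2 + ε / Real.sqrt n)) z.2
      + (1/2) * poissonPMF (k * (1/2 - ε / Real.sqrt n)) z.2)
  else (1/2) * poissonPMF (k / 2) z.2

/-!
With `X` uniform, `I(X;A)` is a sum of terms `x log₂ (2x/(x+y))`, and `log u ≤ u - 1` bounds it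
by `χ²(P₁ ‖ P₀) / (2 ln 2)`. For Poisson laws the χ²-divergence is explicit, because
`∑ₐ Po(m₁)(a) Po(m₂)(a) / Po(l)(a) = exp ((m₁ - l)(m₂ - l)/l)` (an exponential series); for the
symmetric mixture with `m₁, m₂ = k(1/2 ± δ)`, `δ = ε/√n`, this gives `χ² = cosh t - 1` with
`t = 2kδ²`. Hence `I ≤ t²` when `t ≤ 1`, while `I ≤ 1 ≤ t²` otherwise, and `t² = 4k²ε⁴/n²`.
-/

open Real

lemma poissonPMF_nonneg {lam : ℝ} (hlam : 0 ≤ lam) (a : ℕ) : 0 ≤ poissonPMF lam a := by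
  unfold poissonPMF; positivity

lemma poissonPMF_pos {lam : ℝ} (hlam : 0 < lam) (a : ℕ) : 0 < poissonPMF lam a := by
  unfold poissonPMF; positivity

lemma hasSum_poissonPMF (lam : ℝ) : HasSum (poissonPMF lam) 1 := by
  have h := (NormedSpace.expSeries_div_hasSum_exp lam).mul_left (exp (-lam))
  rw [← exp_eq_exp_ℝ, ← exp_add, neg_add_cancel, exp_zero] at h
  exact h.congr_fun fun a => mul_div_assoc _ _ _

lemma hasSum_poissonPMF_mul_poissonPMF_div {l : ℝ} (hl : 0 < l) (m₁ m₂ : ℝ) :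
    HasSum (fun a => poissonPMF m₁ a * poissonPMF m₂ a / poissonPMF l a)
      (exp ((m₁ - l) * (m₂ - l) / l)) := by
  have h :=
    (NormedSpace.expSeries_div_hasSum_exp (m₁ * m₂ / l)).mul_left (exp (l - m₁ - m₂))
  rw [← exp_eq_exp_ℝ, ← exp_add,
    show l - m₁ - m₂ + m₁ * m₂ / l = (m₁ - l) * (m₂ - l) / l by field_simp; ring] at h
  refine h.congr_fun fun a => ?_
  have hfact : (Nat.factorial a : ℝ) ≠ 0 := by positivity
  rw [poissonPMF, poissonPMF, poissonPMF, show l - m₁ - m₂ = -m₁ + -m₂ - -l by ring,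
    exp_sub, exp_add, div_pow, mul_pow]
  field_simp

lemma hasSum_chiSq_poissonPMF_mixture {l m₁ m₂ : ℝ} (hl : 0 < l) (hm : m₁ + m₂ = 2 * l) :
    HasSum (fun a => (poissonPMF l a - ((1/2) * poissonPMF m₁ a + (1/2) * poissonPMF m₂ a)) ^ 2
      / poissonPMF l a) (cosh ((m₁ - l) ^ 2 / l) - 1) := by
  have h₁₁ := hasSum_poissonPMF_mul_poissonPMF_div hl m₁ m₁
  have h₁₂ := hasSum_poissonPMF_mul_poissonPMF_div hl m₁ m₂
  have h₂₂ := hasSum_poissonPMF_mul_poissonPMF_div hl m₂ m₂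
  have h := ((hasSum_poissonPMF l).sub ((hasSum_poissonPMF m₁).add (hasSum_poissonPMF m₂))).add
    (((h₁₁.mul_left (1/4)).add (h₁₂.mul_left (1/2))).add (h₂₂.mul_left (1/4)))
  have hm₂ : m₂ - l = -(m₁ - l) := by linarith
  rw [hm₂, neg_mul_neg, mul_neg, neg_div, ← sq,
    show 1 - (1 + 1) + (1/4 * exp ((m₁ - l) ^ 2 / l) + 1/2 * exp (-((m₁ - l) ^ 2 / l))
      + 1/4 * exp ((m₁ - l) ^ 2 / l)) = cosh ((m₁ - l) ^ 2 / l) - 1 by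
      rw [cosh_eq]; ring] at h
  refine h.congr_fun fun a => ?_
  have := (poissonPMF_pos hl a).ne'
  field_simp
  ring

lemma cosh_sub_one_le_sq {t : ℝ} (ht : |t| ≤ 1) : cosh t - 1 ≤ t ^ 2 := by
  have ht2 : |t ^ 2 / 2| ≤ 1 := by
    rw [abs_of_nonneg (by positivity), ← sq_abs]
    nlinarith [abs_nonneg t]
  have h := abs_exp_sub_one_le ht2
  rw [abs_of_nonneg (by positivity : 0 ≤ t ^ 2 / 2), abs_le] at h
  linarith [cosh_le_exp_half_sq t]

lemma mul_log_div_le {x s : ℝ} (hx : 0 ≤ x) (hs : 0 < s) :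
    x * log (x / s) ≤ x * (x - s) / s := by
  calc x * log (x / s) ≤ x * (x / s - 1) := by
        rcases hx.eq_or_lt with rfl | hx
        · simp
        · exact mul_le_mul_of_nonneg_left (log_le_sub_one_of_pos (by positivity)) hx.le
    _ = x * (x - s) / s := by field_simp

lemma mul_logb_two_div_le_self {x s : ℝ} (hx : 0 ≤ x) (hxs : x ≤ 2 * s) :
    x * logb 2 (x / s) ≤ x := by
  rcases hx.eq_or_lt with rfl | hx
  · simp
  have hs : 0 < s := by linarith
  calc x * logb 2 (x / s) ≤ x * logb 2 2 := by
        refine mul_le_mul_of_nonneg_left (logb_le_logb_of_le one_lt_two (by positivity) ?_) hx.le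
        rw [div_le_iff₀ hs]
        linarith
    _ = x := by rw [logb_self_eq_one one_lt_two, mul_one]

lemma mul_logb_two_add_mul_logb_two_le {x y : ℝ} (hx : 0 < x) (hy : 0 ≤ y) :
    x * logb 2 (x / ((1/2) * (x + y))) + y * logb 2 (y / ((1/2) * (x + y)))
      ≤ (x - y) ^ 2 / (x * log 2) := by
  have hs : 0 < (1/2) * (x + y) := by positivity
  have hlog : 0 < log 2 := log_pos one_lt_two
  simp only [logb, ← mul_div_assoc]
  calc x * log (x / ((1/2) * (x + y))) / log 2 + y * log (y / ((1/2) * (x + y))) / log 2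
      ≤ x * (x - (1/2) * (x + y)) / ((1/2) * (x + y)) / log 2
        + y * (y - (1/2) * (x + y)) / ((1/2) * (x + y)) / log 2 := by
        gcongr
        · exact mul_log_div_le hx.le hs
        · exact mul_log_div_le hy hs
    _ = (x - y) ^ 2 / ((x + y) * log 2) := by field_simp; ring
    _ ≤ (x - y) ^ 2 / (x * log 2) := by gcongr; linarith

lemma tsum_le_of_forall_add_le {α : Type*} {f : Bool × α → ℝ} {g : α → ℝ} {c : ℝ}
    (hg : HasSum g c) (hc : 0 ≤ c) (hfg : ∀ a, f (false, a) + f (true, a) ≤ g a) :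
    ∑' z, f z ≤ c := by
  by_cases hf : Summable f
  · have h₀ := (hf.prod_factor false).hasSum
    have h₁ := (hf.prod_factor true).hasSum
    rw [((Equiv.boolProdEquivSum α).symm.hasSum_iff.mp (h₀.sum h₁)).tsum_eq]
    exact hasSum_le hfg (h₀.add h₁) hg
  · rw [tsum_eq_zero_of_not_summable hf]
    exact hc

noncomputable def uniformBitJoint (p₀ p₁ : ℕ → ℝ) : Bool × ℕ → ℝ := fun z =>
  if z.1 then (1/2) * p₁ z.2 else (1/2) * p₀ z.2

section UniformBitJoint

variable {p₀ p₁ : ℕ → ℝ}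

lemma mutualInfoBoolNat_uniformBitJoint (h₀ : HasSum p₀ 1) (h₁ : HasSum p₁ 1) :
    mutualInfoBoolNat (uniformBitJoint p₀ p₁) = ∑' z, uniformBitJoint p₀ p₁ z *
      logb 2 (uniformBitJoint p₀ p₁ z / ((1/2) * (uniformBitJoint p₀ p₁ (false, z.2)
        + uniformBitJoint p₀ p₁ (true, z.2)))) := by
  have hmarg : ∀ b, ∑' a, uniformBitJoint p₀ p₁ (b, a) = 1/2 := by
    rintro (_ | _)
    · exact ((h₀.mul_left (1/2)).tsum_eq).trans (mul_one _)
    · exact ((h₁.mul_left (1/2)).tsum_eq).trans (mul_one _)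
  simp only [mutualInfoBoolNat, hmarg]

lemma mutualInfoBoolNat_uniformBitJoint_le_one (h₀ : HasSum p₀ 1) (h₁ : HasSum p₁ 1)
    (hp₀ : ∀ a, 0 ≤ p₀ a) (hp₁ : ∀ a, 0 ≤ p₁ a) :
    mutualInfoBoolNat (uniformBitJoint p₀ p₁) ≤ 1 := by
  rw [mutualInfoBoolNat_uniformBitJoint h₀ h₁]
  refine (tsum_le_of_forall_add_le ((h₀.mul_left (1/2)).add (h₁.mul_left (1/2)))
    (by norm_num) fun a => ?_).trans_eq (by norm_num)
  have := hp₀ a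
  have := hp₁ a
  simp only [uniformBitJoint, if_true, Bool.false_eq_true, if_false]
  exact add_le_add (mul_logb_two_div_le_self (by positivity) (by linarith))
    (mul_logb_two_div_le_self (by positivity) (by linarith))

lemma mutualInfoBoolNat_uniformBitJoint_le_chiSq {χ : ℝ} (h₀ : HasSum p₀ 1)
    (h₁ : HasSum p₁ 1) (hp₀ : ∀ a, 0 < p₀ a) (hp₁ : ∀ a, 0 ≤ p₁ a)
    (hχ : HasSum (fun a => (p₀ a - p₁ a) ^ 2 / p₀ a) χ) :
    mutualInfoBoolNat (uniformBitJoint p₀ p₁) ≤ χ / (2 * log 2) := by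
  rw [mutualInfoBoolNat_uniformBitJoint h₀ h₁]
  have hlog : 0 < log 2 := log_pos one_lt_two
  have hχ0 : 0 ≤ χ := hχ.nonneg fun a => div_nonneg (sq_nonneg _) (hp₀ a).le
  refine tsum_le_of_forall_add_le (hχ.div_const (2 * log 2)) (by positivity) fun a => ?_
  have := hp₀ a
  have := hp₁ a
  simp only [uniformBitJoint, if_true, Bool.false_eq_true, if_false]
  refine (mul_logb_two_add_mul_logb_two_le (by positivity) (by positivity)).trans_eq ?_
  field_simp

end UniformBitJoint

lemma mutualInfoBoolNat_poissonPMF_mixture_le {l m₁ m₂ : ℝ} (hl : 0 < l) (hm₁ : 0 ≤ m₁)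
    (hm₂ : 0 ≤ m₂) (hm : m₁ + m₂ = 2 * l) :
    mutualInfoBoolNat (uniformBitJoint (poissonPMF l)
      (fun a => (1/2) * poissonPMF m₁ a + (1/2) * poissonPMF m₂ a)) ≤ ((m₁ - l) ^ 2 / l) ^ 2 := by
  set t := (m₁ - l) ^ 2 / l
  have h₀ := hasSum_poissonPMF l
  have h₁ :=
    ((hasSum_poissonPMF m₁).mul_left (1/2)).add ((hasSum_poissonPMF m₂).mul_left (1/2))
  rw [mul_one, add_halves] at h₁
  have hp₁ : ∀ a, 0 ≤ (1/2) * poissonPMF m₁ a + (1/2) * poissonPMF m₂ a := fun a => by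
    have := poissonPMF_nonneg hm₁ a
    have := poissonPMF_nonneg hm₂ a
    positivity
  rcases le_or_gt t 1 with ht | ht
  · have ht0 : 0 ≤ t := by positivity
    have hlog : 1 ≤ 2 * log 2 := by linarith [log_two_gt_d9]
    calc _ ≤ (cosh t - 1) / (2 * log 2) := mutualInfoBoolNat_uniformBitJoint_le_chiSq h₀ h₁
          (poissonPMF_pos hl) hp₁ (hasSum_chiSq_poissonPMF_mixture hl hm)
      _ ≤ t ^ 2 / (2 * log 2) := by
        gcongr
        exact cosh_sub_one_le_sq (abs_le.mpr ⟨by linarith, ht⟩)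
      _ ≤ t ^ 2 := div_le_self (sq_nonneg t) hlog
  · calc _ ≤ 1 := mutualInfoBoolNat_uniformBitJoint_le_one h₀ h₁
          (fun a => (poissonPMF_pos hl a).le) hp₁
      _ ≤ t ^ 2 := by nlinarith

theorem stmt9 : ∃ C : ℝ, 0 < C ∧
    ∀ (n : ℕ), 1 ≤ n → ∀ (k : ℝ), 0 < k → ∀ (ε : ℝ), ε ∈ Set.Ioc (0:ℝ) 1 →
      ε / Real.sqrt n ≤ 1/2 →
      mutualInfoBoolNat (muNine n k ε) ≤ C * k ^ 2 * ε ^ 4 / (n : ℝ) ^ 2 := by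
  refine ⟨4, by norm_num, fun n _ k hk ε hε hδ => ?_⟩
  set δ := ε / √n
  have hδ0 : 0 ≤ δ := div_nonneg hε.1.le (sqrt_nonneg _)
  have hδ4 : δ ^ 4 = ε ^ 4 / (n : ℝ) ^ 2 := by
    rw [div_pow, show √(n : ℝ) ^ 4 = (√n ^ 2) ^ 2 by ring, sq_sqrt n.cast_nonneg]
  calc mutualInfoBoolNat (muNine n k ε)
      ≤ ((k * (1/2 + δ) - k / 2) ^ 2 / (k / 2)) ^ 2 :=
        mutualInfoBoolNat_poissonPMF_mixture_le (by positivity) (by positivity) (by nlinarith)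
          (by ring)
    _ = 4 * k ^ 2 * ε ^ 4 / (n : ℝ) ^ 2 := by
        rw [mul_div_assoc, ← hδ4]
        field_simp
        ring
end

section
/- There exist absolute constants c > 0, ε₀ ∈ (0,1), and n₀ ∈ ℕ such that for every n ≥ n₀, every ε ∈ (0, ε₀], and every b ∈ {0,1}^n with n/3 ≤ ∑_{j=1}^n b_j ≤ 2n/3, the product distribution P_b over {0,1}^n with mean vector ((1 + (−1)^{b_j}·ε)/n)_{j=1,...,n} satisfies ‖P_b − P*‖₁ ≥ c·ε, where P* is the product distribution over {0,1}^n with mean vector (1/n, ..., 1/n). -/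
open Finset Real

lemma sum_prodDist_filter_forall_eq_false {n : ℕ} (p : Fin n → ℝ) (S : Finset (Fin n)) :
    ∑ x with ∀ j ∈ S, x j = false, prodDist p x = ∏ j ∈ S, (1 - p j) := by
  classical
  set f : Fin n → Bool → ℝ := fun j y => if y then (if j ∈ S then 0 else p j) else 1 - p j
  have hindicator (x : Fin n → Bool) :
      (if ∀ j ∈ S, x j = false then prodDist p x else 0) = ∏ j, f j (x j) := by
    split_ifs with hx
    · refine prod_congr rfl fun j _ => ?_
      by_cases hj : j ∈ S
      · simp [f, hx j hj]
      · cases x j <;> simp [f, hj]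
    · obtain ⟨j, hj, hxj⟩ : ∃ j ∈ S, x j = true := by simpa using hx
      exact (prod_eq_zero (mem_univ j) (by simp [f, hj, hxj])).symm
  have hfiber (j : Fin n) : ∑ y, f j y = if j ∈ S then 1 - p j else 1 := by
    by_cases hj : j ∈ S <;> simp [f, hj]
  rw [sum_filter, Fintype.sum_congr _ _ hindicator, ← Fintype.prod_sum,
    Fintype.prod_congr _ _ hfiber, prod_ite_mem, univ_inter]

lemma abs_sum_sub_sum_le_l1Dist {α : Type*} [Fintype α] (P Q : α → ℝ) (A : Finset α) :
    |∑ x ∈ A, P x - ∑ x ∈ A, Q x| ≤ l1Dist P Q := by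
  rw [← sum_sub_distrib]
  exact (abs_sum_le_sum_abs _ _).trans (sum_le_univ_sum_of_nonneg fun _ => abs_nonneg _)

lemma abs_pow_sub_pow_le_l1Dist_prodDist {n : ℕ} {p q : Fin n → ℝ} {S : Finset (Fin n)}
    {u v : ℝ} (hp : ∀ j ∈ S, p j = u) (hq : ∀ j ∈ S, q j = v) :
    |(1 - u) ^ #S - (1 - v) ^ #S| ≤ l1Dist (prodDist p) (prodDist q) := by
  have hevent (r : Fin n → ℝ) (w : ℝ) (hr : ∀ j ∈ S, r j = w) :
      ∑ x with ∀ j ∈ S, x j = false, prodDist r x = (1 - w) ^ #S := by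
    rw [sum_prodDist_filter_forall_eq_false, prod_congr rfl fun j hj => by rw [hr j hj],
      prod_const]
  rw [← hevent p u hp, ← hevent q v hq]
  exact abs_sum_sub_sum_le_l1Dist _ _ _

lemma mul_sub_mul_pow_pred_le_pow_sub_pow {a t : ℝ} (ht : 0 ≤ t) (hta : t ≤ a) (m : ℕ) :
    m * (a - t) * t ^ (m - 1) ≤ a ^ m - t ^ m := by
  obtain _ | k := m
  · simp
  rw [Nat.add_sub_cancel]
  push_cast
  induction k with
  | zero => simp
  | succ k ih =>
    have hgap : 0 ≤ (k + 1) * (a - t) * t ^ k := by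
      have := sub_nonneg.2 hta
      positivity
    calc ((k + 1 : ℕ) + 1 : ℝ) * (a - t) * t ^ (k + 1)
        = t * ((k + 1) * (a - t) * t ^ k) + (a - t) * t ^ (k + 1) := by push_cast; ring
      _ ≤ a * ((k + 1) * (a - t) * t ^ k) + (a - t) * t ^ (k + 1) := by gcongr
      _ ≤ a * (a ^ (k + 1) - t ^ (k + 1)) + (a - t) * t ^ (k + 1) := by gcongr; linarith
      _ = a ^ (k + 1 + 1) - t ^ (k + 1 + 1) := by ring

lemma exp_neg_two_mul_le_one_sub {x : ℝ} (hx0 : 0 ≤ x) (hx : x ≤ 1 / 2) :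
    exp (-(2 * x)) ≤ 1 - x := by
  have hpos : 0 < 1 + 2 * x := by linarith
  calc exp (-(2 * x)) = (exp (2 * x))⁻¹ := exp_neg _
    _ ≤ (1 + 2 * x)⁻¹ := inv_anti₀ hpos (by linarith [add_one_le_exp (2 * x)])
    _ ≤ 1 - x := by
      rw [inv_le_iff_one_le_mul₀ hpos]
      nlinarith

lemma exp_neg_four_le_one_sub_pow {n k : ℕ} {u : ℝ} (hn : 4 ≤ n) (hu0 : 0 ≤ u)
    (hu : u ≤ 2 / n) (hk : k ≤ n) : exp (-4) ≤ (1 - u) ^ k := by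
  have hn' : (4 : ℝ) ≤ n := by exact_mod_cast hn
  have h2n : 2 / (n : ℝ) ≤ 1 / 2 := by
    rw [div_le_div_iff₀ (by linarith) (by norm_num)]
    linarith
  calc exp (-4) = exp (-(2 * (2 / n))) ^ n := by
        rw [← exp_nat_mul]
        congr 1
        field_simp
        norm_num
    _ ≤ (1 - 2 / n) ^ n :=
        pow_le_pow_left₀ (exp_pos _).le (exp_neg_two_mul_le_one_sub (by positivity) h2n) n
    _ ≤ (1 - u) ^ n := pow_le_pow_left₀ (by linarith) (by linarith) n
    _ ≤ (1 - u) ^ k := pow_le_pow_of_le_one (by linarith) (by linarith) hk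

lemma card_filter_eq_false_add_sum_ite {ι : Type*} [Fintype ι] (b : ι → Bool) :
    (#{j | b j = false} : ℝ) + ∑ j, (if b j then (1 : ℝ) else 0) = Fintype.card ι := by
  rw [sum_boole]
  norm_cast
  simpa [add_comm] using card_filter_add_card_filter_not (s := univ) (fun j => b j = true)

theorem stmt10 : ∃ c : ℝ, 0 < c ∧ ∃ ε₀ ∈ Set.Ioo (0:ℝ) 1, ∃ n₀ : ℕ,
    ∀ n : ℕ, n₀ ≤ n → ∀ ε : ℝ, ε ∈ Set.Ioc (0:ℝ) ε₀ → ∀ b : Fin n → Bool,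
      (n : ℝ) / 3 ≤ ∑ j, (if b j then (1:ℝ) else 0) →
      (∑ j, (if b j then (1:ℝ) else 0)) ≤ 2 * n / 3 →
      c * ε ≤ l1Dist
          (prodDist (fun j => (1 + (if b j then -ε else ε)) / n))
          (prodDist (fun _ : Fin n => 1 / n)) := by
  refine ⟨exp (-4) / 3, by positivity, 1 / 2, ⟨by norm_num, by norm_num⟩, 4, ?_⟩
  rintro n hn ε ⟨hε0, hε⟩ b - hhigh
  have hn' : (4 : ℝ) ≤ n := by exact_mod_cast hn
  set S : Finset (Fin n) := {j | b j = false}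
  have hS : (n : ℝ) / 3 ≤ #S := by
    have := card_filter_eq_false_add_sum_ite b
    rw [Fintype.card_fin] at this
    linarith
  have hSn : #S - 1 ≤ n :=
    (Nat.sub_le _ _).trans ((card_le_univ S).trans_eq (Fintype.card_fin n))
  have hmean_le : (1 + ε) / n ≤ 2 / n := by gcongr; linarith
  have hmean_ge : 1 / n ≤ (1 + ε) / n := by gcongr; linarith
  have htwo_div_le : 2 / (n : ℝ) ≤ 1 := by rw [div_le_one (by positivity)]; linarith
  calc exp (-4) / 3 * ε = ε / n * (n / 3 * exp (-4)) := by field_simp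
    _ ≤ ε / n * (#S * (1 - (1 + ε) / n) ^ (#S - 1)) := by
        gcongr
        exact exp_neg_four_le_one_sub_pow hn (by positivity) hmean_le hSn
    _ = #S * ((1 - 1 / n) - (1 - (1 + ε) / n)) * (1 - (1 + ε) / n) ^ (#S - 1) := by ring
    _ ≤ (1 - 1 / n) ^ #S - (1 - (1 + ε) / n) ^ #S :=
        mul_sub_mul_pow_pred_le_pow_sub_pow (by linarith) (by linarith) _
    _ ≤ |(1 - (1 + ε) / n) ^ #S - (1 - 1 / n) ^ #S| :=
        (le_abs_self _).trans_eq (abs_sub_comm _ _)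
    _ ≤ _ := abs_pow_sub_pow_le_l1Dist_prodDist (by intro j hj; simp_all [S]) fun _ _ => rfl
end

section
/- Let N ∈ ℕ and p, q ∈ [0,1], and let Z be a random variable distributed as Binomial(N, p). Then E[(Z − q·N)² + (2q − 1)·Z − q²·N] = N·(N − 1)·(p − q)². -/
theorem stmt14 (N : ℕ) (p q : ℝ) (hp : p ∈ Set.Icc (0:ℝ) 1) (hq : q ∈ Set.Icc (0:ℝ) 1) :
    ∑ k ∈ Finset.range (N + 1),
        (N.choose k : ℝ) * p ^ k * (1 - p) ^ (N - k) *
          (((k : ℝ) - q * N) ^ 2 + (2 * q - 1) * (k : ℝ) - q ^ 2 * N)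
      = (N : ℝ) * ((N : ℝ) - 1) * (p - q) ^ 2 := by
  set w : ℕ → ℝ := fun k => (N.choose k : ℝ) * p ^ k * (1 - p) ^ (N - k) with hw
  have hev : ∀ k, Polynomial.eval p (bernsteinPolynomial ℝ N k) = w k := by
    intro k; simp [bernsteinPolynomial, hw]
  have S0 : ∑ k ∈ Finset.range (N + 1), w k = 1 := by
    have := congrArg (Polynomial.eval p) (bernsteinPolynomial.sum ℝ N)
    simpa [Polynomial.eval_finset_sum, hev] using this
  have S1 : ∑ k ∈ Finset.range (N + 1), (k : ℝ) * w k = N * p := by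
    have := congrArg (Polynomial.eval p) (bernsteinPolynomial.sum_smul ℝ N)
    simpa [Polynomial.eval_finset_sum, hev, nsmul_eq_mul] using this
  have S2 : ∑ k ∈ Finset.range (N + 1), (k : ℝ) * ((k : ℝ) - 1) * w k
      = N * ((N : ℝ) - 1) * p ^ 2 := by
    have := congrArg (Polynomial.eval p) (bernsteinPolynomial.sum_mul_smul ℝ N)
    simp only [Polynomial.eval_finset_sum, nsmul_eq_mul, Polynomial.eval_mul,
      Polynomial.eval_natCast, Polynomial.eval_pow, Polynomial.eval_X, hev] at this
    have left : ∑ k ∈ Finset.range (N + 1), ((k * (k - 1) : ℕ) : ℝ) * w k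
        = ∑ k ∈ Finset.range (N + 1), (k : ℝ) * ((k : ℝ) - 1) * w k := by
      refine Finset.sum_congr rfl fun k _ => ?_
      match k with
      | 0 => simp
      | k + 1 => push_cast; ring
    rw [left] at this
    rw [this]
    match N with
    | 0 => simp
    | n + 1 => push_cast; ring
  have key : ∀ k ∈ Finset.range (N + 1),
      (N.choose k : ℝ) * p ^ k * (1 - p) ^ (N - k) *
          (((k : ℝ) - q * N) ^ 2 + (2 * q - 1) * (k : ℝ) - q ^ 2 * N)
        = (k : ℝ) * ((k : ℝ) - 1) * w k + (2 * q * (1 - N)) * ((k : ℝ) * w k)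
          + (q ^ 2 * N * ((N : ℝ) - 1)) * w k := by
    intro k _; simp only [hw]; ring
  rw [Finset.sum_congr rfl key]
  simp only [Finset.sum_add_distrib, ← Finset.mul_sum, S0, S1, S2]
  ring
end

section
/- Let A be a finite set and let Q be a probability distribution on {0,1} × {0,1} × A, whose three coordinates are denoted X_i, X_j, X_S. Define γ* as the infimum of d_TV(Q, R) over all probability distributions R on {0,1} × {0,1} × A under which X_i and X_j are conditionally independent given X_S (equivalently, since X_i and X_j are binary: Cov_R(X_i, X_j | X_S = a) = 0 for every a ∈ A with R[X_S = a] > 0). Define β = ∑_{a ∈ A, Q[X_S=a] > 0} Q[X_S = a] · |Cov_Q(X_i, X_j | X_S = a)|. Then β/3 ≤ γ* ≤ 2β. -/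
/-- The marginal probability of `{X_S = a}` under a distribution on
`{0,1} × {0,1} × A`. -/
noncomputable def margS {A : Type*} [Fintype A] (Q : Bool × Bool × A → ℝ) (a : A) : ℝ :=
  ∑ x : Bool, ∑ y : Bool, Q (x, y, a)

/-- The conditional covariance `Cov(X_i, X_j | X_S = a)` under a distribution on
`{0,1} × {0,1} × A`. -/
noncomputable def condCov {A : Type*} [Fintype A] (Q : Bool × Bool × A → ℝ) (a : A) : ℝ :=
  Q (true, true, a) / margS Q a
    - ((Q (true, false, a) + Q (true, true, a)) / margS Q a)
        * ((Q (false, true, a) + Q (true, true, a)) / margS Q a)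

lemma margS_eq {A : Type*} [Fintype A] (Q : Bool × Bool × A → ℝ) (a : A) :
    margS Q a = Q (false, false, a) + Q (false, true, a) + Q (true, false, a)
      + Q (true, true, a) := by
  simp [margS, Fintype.sum_bool]; ring

lemma sum_eq {A : Type*} [Fintype A] (f : Bool × Bool × A → ℝ) :
    ∑ z, f z = ∑ a : A, (f (false, false, a) + f (false, true, a) + f (true, false, a)
      + f (true, true, a)) := by
  rw [Fintype.sum_prod_type]
  simp only [Fintype.sum_bool, Fintype.sum_prod_type]
  rw [← Finset.sum_add_distrib, ← Finset.sum_add_distrib, ← Finset.sum_add_distrib]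
  apply Finset.sum_congr rfl; intro a _; ring

lemma condCov_eq {A : Type*} [Fintype A] (Q : Bool × Bool × A → ℝ) (a : A)
    (hm : margS Q a ≠ 0) :
    condCov Q a = (Q (true, true, a) * Q (false, false, a)
      - Q (true, false, a) * Q (false, true, a)) / (margS Q a)^2 := by
  rw [condCov]
  rw [margS_eq] at hm ⊢
  field_simp
  ring

lemma margS_zero {A : Type*} [Fintype A] (Q : Bool × Bool × A → ℝ) (a : A)
    (hpos : ∀ z, 0 ≤ Q z) (hm : margS Q a = 0) :
    Q (false, false, a) = 0 ∧ Q (false, true, a) = 0 ∧ Q (true, false, a) = 0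
      ∧ Q (true, true, a) = 0 := by
  rw [margS_eq] at hm
  have h1 := hpos (false, false, a); have h2 := hpos (false, true, a)
  have h3 := hpos (true, false, a); have h4 := hpos (true, true, a)
  refine ⟨by linarith, by linarith, by linarith, by linarith⟩

lemma condCov_zero_of_margS_zero {A : Type*} [Fintype A] (Q : Bool × Bool × A → ℝ) (a : A)
    (hm : margS Q a = 0) : condCov Q a = 0 := by
  simp [condCov, hm]

lemma detbound (q00 q01 q10 q11 : ℝ)
    (h00 : 0 ≤ q00) (h01 : 0 ≤ q01) (h10 : 0 ≤ q10) (h11 : 0 ≤ q11) :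
    |q11 * q00 - q10 * q01| ≤ (q00 + q01 + q10 + q11)^2 / 4 := by
  rw [abs_sub_le_iff]
  constructor
  · nlinarith [sq_nonneg (q11 - q00), mul_nonneg h10 h01, mul_nonneg h10 h00,
      mul_nonneg h11 h01, mul_nonneg h10 h11, mul_nonneg h00 h01, sq_nonneg q10, sq_nonneg q01]
  · nlinarith [sq_nonneg (q10 - q01), mul_nonneg h11 h00, mul_nonneg h10 h00,
      mul_nonneg h11 h01, mul_nonneg h10 h11, mul_nonneg h00 h01, sq_nonneg q11, sq_nonneg q00]

lemma core2 (q00 q01 q10 q11 r00 r01 r10 r11 : ℝ)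
    (h00' : 0 ≤ q00) (h01' : 0 ≤ q01) (h10' : 0 ≤ q10) (h11' : 0 ≤ q11)
    (g00 : 0 ≤ r00) (g01 : 0 ≤ r01)
    (hdet : r11 * r00 = r10 * r01)
    (h : q00 + q01 + q10 + q11 >
      |q00 - r00| + |q01 - r01| + |q10 - r10| + |q11 - r11|) :
    |q11 * q00 - q10 * q01| ≤
      3/2 * ((|q00 - r00| + |q01 - r01| + |q10 - r10| + |q11 - r11|)
        * (q00 + q01 + q10 + q11)) := by
  set d00 := |q00 - r00| with hd00
  set d01 := |q01 - r01| with hd01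
  set d10 := |q10 - r10| with hd10
  set d11 := |q11 - r11| with hd11
  have a00 := abs_nonneg (q00 - r00)
  have a01 := abs_nonneg (q01 - r01)
  have a10 := abs_nonneg (q10 - r10)
  have a11 := abs_nonneg (q11 - r11)
  have b00 := le_abs_self (q00 - r00); have c00 := neg_abs_le (q00 - r00)
  have b01 := le_abs_self (q01 - r01); have c01 := neg_abs_le (q01 - r01)
  have b10 := le_abs_self (q10 - r10); have c10 := neg_abs_le (q10 - r10)
  have b11 := le_abs_self (q11 - r11); have c11 := neg_abs_le (q11 - r11)
  rw [abs_sub_le_iff]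
  constructor <;>
    nlinarith [sq_nonneg (d00 - d11), sq_nonneg (d01 - d10), mul_nonneg h11' a00,
      mul_nonneg h00' a11, mul_nonneg h10' a01, mul_nonneg h01' a10,
      mul_nonneg a00 a11, mul_nonneg a01 a10, mul_nonneg g00 a11, mul_nonneg g01 a10]

lemma core (q00 q01 q10 q11 r00 r01 r10 r11 : ℝ)
    (h00 : 0 ≤ q00) (h01 : 0 ≤ q01) (h10 : 0 ≤ q10) (h11 : 0 ≤ q11)
    (g00 : 0 ≤ r00) (g01 : 0 ≤ r01)
    (hdet : r11 * r00 = r10 * r01) :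
    |q11 * q00 - q10 * q01| ≤
      3/2 * ((|q00 - r00| + |q01 - r01| + |q10 - r10| + |q11 - r11|)
        * (q00 + q01 + q10 + q11)) := by
  rcases le_or_gt (q00 + q01 + q10 + q11)
      (|q00 - r00| + |q01 - r01| + |q10 - r10| + |q11 - r11|) with h | h
  · have k := detbound q00 q01 q10 q11 h00 h01 h10 h11
    have hm : 0 ≤ q00 + q01 + q10 + q11 := by linarith
    nlinarith
  · exact core2 q00 q01 q10 q11 r00 r01 r10 r11 h00 h01 h10 h11 g00 g01 hdet h

lemma margS_nonneg {A : Type*} [Fintype A] (Q : Bool × Bool × A → ℝ)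
    (hpos : ∀ z, 0 ≤ Q z) (a : A) : 0 ≤ margS Q a := by
  rw [margS_eq]
  have h1 := hpos (false, false, a); have h2 := hpos (false, true, a)
  have h3 := hpos (true, false, a); have h4 := hpos (true, true, a)
  linarith

/-- the determinant of R vanishes -/
lemma det_zero {A : Type*} [Fintype A] (R : Bool × Bool × A → ℝ)
    (hpos : ∀ z, 0 ≤ R z) (a : A) (hR : 0 < margS R a → condCov R a = 0) :
    R (true, true, a) * R (false, false, a) = R (true, false, a) * R (false, true, a) := by
  rcases lt_or_eq_of_le (margS_nonneg R hpos a) with h | h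
  · have h0 := hR h
    rw [condCov_eq R a (ne_of_gt h)] at h0
    have := div_eq_zero_iff.mp h0
    rcases this with h1 | h1
    · linarith
    · exact absurd h1 (pow_ne_zero 2 (ne_of_gt h))
  · obtain ⟨e1, e2, e3, e4⟩ := margS_zero R a hpos h.symm
    rw [e1, e2, e3, e4]

/-- per-a lower bound -/
lemma lower_a {A : Type*} [Fintype A] (Q R : Bool × Bool × A → ℝ)
    (hQ : ∀ z, 0 ≤ Q z) (hRpos : ∀ z, 0 ≤ R z) (a : A)
    (hR : 0 < margS R a → condCov R a = 0) :
    margS Q a * |condCov Q a| ≤ (3/2) *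
      (|Q (false, false, a) - R (false, false, a)| + |Q (false, true, a) - R (false, true, a)|
        + |Q (true, false, a) - R (true, false, a)|
        + |Q (true, true, a) - R (true, true, a)|) := by
  have hdet := det_zero R hRpos a hR
  have hrhs : 0 ≤ |Q (false, false, a) - R (false, false, a)|
      + |Q (false, true, a) - R (false, true, a)|
      + |Q (true, false, a) - R (true, false, a)|
      + |Q (true, true, a) - R (true, true, a)| := by positivity
  rcases lt_or_eq_of_le (margS_nonneg Q hQ a) with h | h
  · have hcc := condCov_eq Q a (ne_of_gt h)
    have hme := margS_eq Q a
    have hcore := core (Q (false, false, a)) (Q (false, true, a)) (Q (true, false, a))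
      (Q (true, true, a)) (R (false, false, a)) (R (false, true, a)) (R (true, false, a))
      (R (true, true, a)) (hQ _) (hQ _) (hQ _) (hQ _) (hRpos _) (hRpos _) hdet
    rw [hcc, abs_div, abs_pow, abs_of_pos h]
    have heq : margS Q a * (|Q (true, true, a) * Q (false, false, a)
        - Q (true, false, a) * Q (false, true, a)| / margS Q a ^ 2)
        = |Q (true, true, a) * Q (false, false, a)
          - Q (true, false, a) * Q (false, true, a)| / margS Q a := by
      field_simp
    rw [heq, div_le_iff₀ h, hme]
    linarith [hcore]
  · rw [condCov_zero_of_margS_zero Q a h.symm, abs_zero, mul_zero]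
    linarith

noncomputable def Rprod {A : Type*} [Fintype A] (Q : Bool × Bool × A → ℝ) :
    Bool × Bool × A → ℝ :=
  fun z => (∑ y : Bool, Q (z.1, y, z.2.2)) * (∑ x : Bool, Q (x, z.2.1, z.2.2)) / margS Q z.2.2

lemma Rprod_nonneg {A : Type*} [Fintype A] (Q : Bool × Bool × A → ℝ)
    (hQ : ∀ z, 0 ≤ Q z) (z : Bool × Bool × A) : 0 ≤ Rprod Q z := by
  apply div_nonneg
  · exact mul_nonneg (Finset.sum_nonneg fun _ _ => hQ _) (Finset.sum_nonneg fun _ _ => hQ _)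
  · exact margS_nonneg Q hQ _

lemma Rprod_cell {A : Type*} [Fintype A] (Q : Bool × Bool × A → ℝ) (x y : Bool) (a : A) :
    Rprod Q (x, y, a) = (Q (x, true, a) + Q (x, false, a))
      * (Q (true, y, a) + Q (false, y, a)) / margS Q a := by
  simp [Rprod, Fintype.sum_bool]

lemma Rprod_margS {A : Type*} [Fintype A] (Q : Bool × Bool × A → ℝ)
    (hQ : ∀ z, 0 ≤ Q z) (a : A) : margS (Rprod Q) a = margS Q a := by
  rw [margS_eq]
  rw [Rprod_cell, Rprod_cell, Rprod_cell, Rprod_cell]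
  rcases eq_or_ne (margS Q a) 0 with h | h
  · obtain ⟨e1, e2, e3, e4⟩ := margS_zero Q a hQ h
    rw [h, e1, e2, e3, e4]
    norm_num
  · rw [margS_eq] at h ⊢
    field_simp
    ring

lemma Rprod_condCov {A : Type*} [Fintype A] (Q : Bool × Bool × A → ℝ) (a : A)
    (hm : 0 < margS (Rprod Q) a) : condCov (Rprod Q) a = 0 := by
  rw [condCov_eq _ a (ne_of_gt hm)]
  have : Rprod Q (true, true, a) * Rprod Q (false, false, a)
      - Rprod Q (true, false, a) * Rprod Q (false, true, a) = 0 := by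
    rw [Rprod_cell, Rprod_cell, Rprod_cell, Rprod_cell]
    ring
  rw [this, zero_div]

lemma Rprod_dist {A : Type*} [Fintype A] (Q : Bool × Bool × A → ℝ)
    (hQ : ∀ z, 0 ≤ Q z) (a : A) :
    |Q (false, false, a) - Rprod Q (false, false, a)|
      + |Q (false, true, a) - Rprod Q (false, true, a)|
      + |Q (true, false, a) - Rprod Q (true, false, a)|
      + |Q (true, true, a) - Rprod Q (true, true, a)|
      = 4 * (margS Q a * |condCov Q a|) := by
  rcases lt_or_eq_of_le (margS_nonneg Q hQ a) with h | h
  · have hm := ne_of_gt h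
    have hme := margS_eq Q a
    set D := Q (true, true, a) * Q (false, false, a)
      - Q (true, false, a) * Q (false, true, a) with hD
    have e1 : Q (false, false, a) - Rprod Q (false, false, a) = D / margS Q a := by
      rw [Rprod_cell, hD, eq_div_iff hm, sub_mul, div_mul_cancel₀ _ hm, hme]; ring
    have e2 : Q (false, true, a) - Rprod Q (false, true, a) = -D / margS Q a := by
      rw [Rprod_cell, hD, eq_div_iff hm, sub_mul, div_mul_cancel₀ _ hm, hme]; ring
    have e3 : Q (true, false, a) - Rprod Q (true, false, a) = -D / margS Q a := by
      rw [Rprod_cell, hD, eq_div_iff hm, sub_mul, div_mul_cancel₀ _ hm, hme]; ring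
    have e4 : Q (true, true, a) - Rprod Q (true, true, a) = D / margS Q a := by
      rw [Rprod_cell, hD, eq_div_iff hm, sub_mul, div_mul_cancel₀ _ hm, hme]; ring
    rw [e1, e2, e3, e4, condCov_eq Q a hm, ← hD, abs_div, abs_div, abs_neg, abs_div,
      abs_pow, abs_of_pos h]
    field_simp
    ring
  · obtain ⟨f1, f2, f3, f4⟩ := margS_zero Q a hQ h.symm
    have g : ∀ x y : Bool, Rprod Q (x, y, a) = 0 := by
      intro x y
      rw [Rprod_cell]
      cases x <;> cases y <;> simp [f1, f2, f3, f4]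
    rw [f1, f2, f3, f4, g, g, g, g, ← h]
    norm_num

lemma Rprod_sum {A : Type*} [Fintype A] (Q : Bool × Bool × A → ℝ)
    (hQ : ∀ z, 0 ≤ Q z) (hsum : ∑ z, Q z = 1) : ∑ z, Rprod Q z = 1 := by
  rw [sum_eq]
  have : ∀ a : A, Rprod Q (false, false, a) + Rprod Q (false, true, a)
      + Rprod Q (true, false, a) + Rprod Q (true, true, a)
      = Q (false, false, a) + Q (false, true, a) + Q (true, false, a) + Q (true, true, a) := by
    intro a
    have := Rprod_margS Q hQ a
    rw [margS_eq, margS_eq] at this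
    linarith
  rw [Finset.sum_congr rfl (fun a _ => this a), ← sum_eq, hsum]

theorem stmt17 {A : Type*} [Fintype A] (Q : Bool × Bool × A → ℝ)
    (hpos : ∀ z, 0 ≤ Q z) (hsum : ∑ z, Q z = 1) :
    (∑ a : A, margS Q a * |condCov Q a|) / 3
        ≤ sInf {d : ℝ | ∃ R : Bool × Bool × A → ℝ,
            (∀ z, 0 ≤ R z) ∧ (∑ z, R z = 1) ∧
            (∀ a : A, 0 < margS R a → condCov R a = 0) ∧
            d = (1/2) * ∑ z, |Q z - R z|} ∧
      sInf {d : ℝ | ∃ R : Bool × Bool × A → ℝ,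
            (∀ z, 0 ≤ R z) ∧ (∑ z, R z = 1) ∧
            (∀ a : A, 0 < margS R a → condCov R a = 0) ∧
            d = (1/2) * ∑ z, |Q z - R z|}
        ≤ 2 * ∑ a : A, margS Q a * |condCov Q a| := by
  set β := ∑ a : A, margS Q a * |condCov Q a| with hβ
  set S := {d : ℝ | ∃ R : Bool × Bool × A → ℝ,
      (∀ z, 0 ≤ R z) ∧ (∑ z, R z = 1) ∧
      (∀ a : A, 0 < margS R a → condCov R a = 0) ∧
      d = (1/2) * ∑ z, |Q z - R z|} with hS
  have hdist : (1/2 : ℝ) * ∑ z, |Q z - Rprod Q z| = 2 * β := by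
    rw [sum_eq (fun z => |Q z - Rprod Q z|)]
    rw [Finset.sum_congr rfl (fun a _ => Rprod_dist Q hpos a)]
    rw [← Finset.mul_sum, hβ]
    ring
  have hmem : 2 * β ∈ S := by
    refine ⟨Rprod Q, Rprod_nonneg Q hpos, Rprod_sum Q hpos hsum,
      fun a h => Rprod_condCov Q a h, hdist.symm⟩
  have hbdd : BddBelow S := by
    refine ⟨0, fun d hd => ?_⟩
    obtain ⟨R, _, _, _, hd⟩ := hd
    rw [hd]
    positivity
  constructor
  · apply le_csInf ⟨2 * β, hmem⟩
    rintro d ⟨R, hRpos, hRsum, hRcc, rfl⟩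
    rw [div_le_iff₀ (by norm_num : (0:ℝ) < 3)]
    have h1 : β ≤ ∑ a : A, (3/2) *
        (|Q (false, false, a) - R (false, false, a)| + |Q (false, true, a) - R (false, true, a)|
          + |Q (true, false, a) - R (true, false, a)|
          + |Q (true, true, a) - R (true, true, a)|) :=
      Finset.sum_le_sum fun a _ => lower_a Q R hpos hRpos a (hRcc a)
    rw [← Finset.mul_sum, ← sum_eq (fun z => |Q z - R z|)] at h1
    linarith
  · exact csInf_le hbdd hmem
end
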